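/- arXiv:1010.5919 — 11 statements merged into one kernel-verified Lean document; each statement's English description precedes it below -/
import Mathlib

section
/- For every natural number n, the number of permutations π of {1,…,n} that are involutions and avoid the pattern 321 equals the binomial coefficient C(n, ⌊n/2⌋). -/
/-- A permutation of `Fin n` avoids the pattern 321 if there are no indices
`i < j < k` with `π i > π j > π k`. -/
def Avoids321 {n : ℕ} (π : Equiv.Perm (Fin n)) : Prop :=
  ¬ ∃ i j k : Fin n, i < j ∧ j < k ∧ π k < π j ∧ π j < π i

/-- A permutation is an involution if it is its own inverse pointwise. -/
def IsInvolution {n : ℕ} (π : Equiv.Perm (Fin n)) : Prop :=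
  ∀ i, π (π i) = i

/-- A finset of `Fin n` consists of consecutive integers iff it is order-convex. -/
def IsConsecutive {n : ℕ} (I : Finset (Fin n)) : Prop :=
  ∀ x ∈ I, ∀ y ∈ I, ∀ z : Fin n, x ≤ z → z ≤ y → z ∈ I

/-- A permutation is simple if every interval (a set of consecutive integers whose
image is also a set of consecutive integers) has cardinality at most 1 or `n`. -/
def IsSimplePerm {n : ℕ} (π : Equiv.Perm (Fin n)) : Prop :=
  ∀ I : Finset (Fin n), IsConsecutive I → IsConsecutive (I.image π) →
    I.card ≤ 1 ∨ I.card = n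

/-- A permutation of `{1,…,n}` (here 0-indexed on `Fin n`) is sum-decomposable
(of type 12) if it maps some proper nonempty initial segment onto itself. -/
def SumDecomposable {n : ℕ} (π : Equiv.Perm (Fin n)) : Prop :=
  ∃ k : ℕ, 1 ≤ k ∧ k < n ∧
    (π : Fin n → Fin n) '' {i : Fin n | (i : ℕ) < k} = {i : Fin n | (i : ℕ) < k}

/-- A permutation is skew-decomposable (of type 21) if it maps some proper nonempty
initial segment onto the corresponding final segment. -/
def SkewDecomposable {n : ℕ} (π : Equiv.Perm (Fin n)) : Prop :=
  ∃ k : ℕ, 1 ≤ k ∧ k < n ∧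
    (π : Fin n → Fin n) '' {i : Fin n | (i : ℕ) < k} = {i : Fin n | n - k ≤ (i : ℕ)}

/-!
A 321-avoiding involution `π` is increasing both on its weak excedance set
`E = {i | i ≤ π i}` and on the complement of `E`, and it is determined by `E`: comparing two
such involutions at the largest point where they differ produces a 321 pattern. The sets `E`
that occur are exactly the ballot sets, in which every prefix `[0, m)` contains at least as many
points of `E` as of its complement. Conversely, for a ballot set `B`, let the points of `B` after
which the ballot walk (up on `B`, down off `B`) never comes back to its height be fixed, and pair
the remaining points of `B`, in increasing order, with the points outside `B`; this gives a
321-avoiding involution with weak excedance set `B`. Finally, the ballot subsets of size `k` of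
an `n`-set number `C(n, k) - C(n, k + 1)` when `n ≤ 2k`, and these telescope to `C(n, ⌊n/2⌋)`.
-/

open Finset

section Prefix

variable {n : ℕ}

def prefixCard (S : Finset (Fin n)) (m : ℕ) : ℕ := #(S.filter fun i : Fin n => (i : ℕ) < m)

def IsBallot (B : Finset (Fin n)) : Prop := ∀ m ≤ n, prefixCard Bᶜ m ≤ prefixCard B m

instance : DecidablePred (IsBallot (n := n)) := fun _ => by unfold IsBallot; infer_instance

variable (S : Finset (Fin n))

@[simp] theorem prefixCard_zero : prefixCard S 0 = 0 := by simp [prefixCard]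

theorem prefixCard_succ (i : Fin n) :
    prefixCard S (i + 1) = prefixCard S i + if i ∈ S then 1 else 0 := by
  simp only [prefixCard, Nat.lt_succ_iff_lt_or_eq, Fin.val_inj, filter_or]
  rw [card_union_of_disjoint (disjoint_filter.2 fun j _ h h' => h.ne (congrArg Fin.val h')),
    filter_eq']
  split_ifs <;> simp

theorem prefixCard_of_le {m : ℕ} (hm : n ≤ m) : prefixCard S m = #S := by
  rw [prefixCard, filter_true_of_mem fun i _ => i.isLt.trans_le hm]

theorem prefixCard_add_prefixCard_compl (m : ℕ) :
    prefixCard S m + prefixCard Sᶜ m = min n m := by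
  rw [prefixCard, prefixCard,
    ← card_union_of_disjoint (disjoint_filter_filter disjoint_compl_right), ← filter_union,
    union_compl, Fin.card_filter_val_lt]

theorem prefixCard_val (y : Fin n) : prefixCard S y = #{i ∈ S | i < y} := by
  simp only [prefixCard, Fin.lt_def]

end Prefix

theorem isBallot_iff_le_two_mul {n : ℕ} {B : Finset (Fin n)} :
    IsBallot B ↔ ∀ m ≤ n, m ≤ 2 * prefixCard B m := by
  refine forall₂_congr fun m hm => ?_
  have := prefixCard_add_prefixCard_compl B m
  omega

section WeakExcedances

variable {n : ℕ} {π π' : Equiv.Perm (Fin n)}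

def weakExcedances (π : Equiv.Perm (Fin n)) : Finset (Fin n) := {i | i ≤ π i}

@[simp] theorem mem_weakExcedances {i : Fin n} : i ∈ weakExcedances π ↔ i ≤ π i := by
  simp [weakExcedances]

theorem isBallot_weakExcedances (hπ : IsInvolution π) : IsBallot (weakExcedances π) := by
  intro m _
  refine card_le_card_of_injOn π (fun i hi => ?_) π.injective.injOn
  simp only [coe_filter, mem_compl, mem_weakExcedances, not_le, Set.mem_ofPred_eq] at hi ⊢
  rw [hπ]
  exact ⟨hi.1.le, lt_trans (Fin.lt_def.1 hi.1) hi.2⟩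

theorem apply_eq_of_lt_apply (hπ : IsInvolution π) (hπ' : IsInvolution π') {d : Fin n}
    (hagree : ∀ x, d < x → π x = π' x) (hd : d < π d) : π' d = π d := by
  have h : d = π' (π d) := by rw [← hagree _ hd, hπ]
  calc π' d = π' (π' (π d)) := by rw [← h]
    _ = π d := hπ' _

theorem apply_le_apply_of_agree_above (hπ : IsInvolution π) (hπ' : IsInvolution π')
    (h321 : Avoids321 π) (hE : weakExcedances π = weakExcedances π') {d : Fin n}
    (hagree : ∀ x, d < x → π x = π' x) (hd : π' d < d) : π' d ≤ π d := by
  by_contra! hlt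
  set e := π' d
  have he : e ≤ π e := by
    rw [← mem_weakExcedances, hE, mem_weakExcedances, hπ']
    exact hd.le
  have hπe : π e < d := by
    rcases lt_trichotomy (π e) d with h | h | h
    · exact h
    · rw [← h, hπ] at hlt
      exact (lt_irrefl _ hlt).elim
    · have h' : e = π' (π e) := by rw [← hagree _ h, hπ]
      have : π e = d := by
        calc π e = π' (π' (π e)) := (hπ' _).symm
          _ = d := by rw [← h', hπ']
      exact absurd this h.ne'
  rcases he.eq_or_lt with hfix | hexc
  · refine h321 ⟨π d, e, d, hlt, hd, ?_, ?_⟩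
    · rw [← hfix]; exact hlt
    · rw [hπ, ← hfix]; exact hd
  · exact h321 ⟨e, π e, d, hexc, hπe, by rwa [hπ], by rwa [hπ]⟩

theorem eq_of_weakExcedances_eq (hπ : IsInvolution π) (hπ' : IsInvolution π')
    (h321 : Avoids321 π) (h321' : Avoids321 π') (hE : weakExcedances π = weakExcedances π') :
    π = π' := by
  by_contra hne
  obtain ⟨d, hd, hmax⟩ := exists_max_image {x | π x ≠ π' x} id
    (by simpa [Finset.Nonempty, Equiv.ext_iff] using hne)
  replace hd : π d ≠ π' d := (mem_filter.1 hd).2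
  have hagree : ∀ x, d < x → π x = π' x := fun x hx => by
    by_contra h
    exact (hmax x (mem_filter.2 ⟨mem_univ x, h⟩)).not_gt hx
  have hagree' : ∀ x, d < x → π' x = π x := fun x hx => (hagree x hx).symm
  have hE' : d ≤ π d ↔ d ≤ π' d := by
    rw [← mem_weakExcedances, hE, mem_weakExcedances]
  rcases lt_or_ge d (π d) with h | h
  · exact hd (apply_eq_of_lt_apply hπ hπ' hagree h).symm
  rcases lt_or_ge d (π' d) with h' | h'
  · exact hd (apply_eq_of_lt_apply hπ' hπ hagree' h')
  rcases h.eq_or_lt with h | h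
  · exact hd (h.trans (le_antisymm h' (hE'.1 h.ge)).symm)
  have h' : π' d < d := not_le.1 (hE'.not.1 (not_le.2 h))
  exact hd (le_antisymm (apply_le_apply_of_agree_above hπ' hπ h321' hE.symm hagree' h)
    (apply_le_apply_of_agree_above hπ hπ' h321 hE hagree h'))

theorem avoids321_of_strictMonoOn {s : Set (Fin n)}
    (h : StrictMonoOn π s) (h' : StrictMonoOn π sᶜ) : Avoids321 π := by
  rintro ⟨i, j, k, hij, hjk, hkj, hji⟩
  have split : ∀ a b, a < b → π b < π a → (a ∈ s ↔ b ∉ s) := fun a b hab hba =>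
    ⟨fun ha hb => (h ha hb hab).not_gt hba,
      fun hb => by_contra fun ha => (h' ha hb hab).not_gt hba⟩
  have := split i j hij hji
  have := split j k hjk hkj
  have := split i k (hij.trans hjk) (hkj.trans hji)
  tauto

end WeakExcedances

section Pairing

variable {α : Type*} [LinearOrder α] {O C : Finset α}

theorem card_filter_lt_orderIso (e : O ≃o C) (x : O) :
    #{y ∈ O | y < (x : α)} = #{y ∈ C | y < (e x : α)} := by
  refine card_bij (fun y hy => (e ⟨y, (mem_filter.1 hy).1⟩ : α)) (fun y hy => ?_)
    (fun y hy z hz h => ?_) (fun z hz => ?_)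
  · simp only [mem_filter, coe_mem, true_and, Subtype.coe_lt_coe, e.lt_iff_lt]
    exact (mem_filter.1 hy).2
  · simpa using e.injective (Subtype.ext h)
  · obtain ⟨hzC, hzx⟩ := mem_filter.1 hz
    refine ⟨e.symm ⟨z, hzC⟩, mem_filter.2 ⟨coe_mem _, ?_⟩, by simp⟩
    change e.symm ⟨z, hzC⟩ < x
    rw [← e.lt_iff_lt, e.apply_symm_apply]
    exact hzx

theorem card_filter_lt_lt_of_lt {S : Finset α} {x y : α} (hx : x ∈ S) (hxy : x < y) :
    #{z ∈ S | z < x} < #{z ∈ S | z < y} :=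
  card_lt_card <| (ssubset_iff_of_subset (monotone_filter_right _ fun _ _ hz => hz.trans hxy)).2
    ⟨x, mem_filter.2 ⟨hx, hxy⟩, by simp⟩

theorem card_filter_lt_mono {S : Finset α} {x y : α} (hxy : x ≤ y) :
    #{z ∈ S | z < x} ≤ #{z ∈ S | z < y} :=
  card_le_card <| monotone_filter_right _ fun _ _ hz => hz.trans_le hxy

theorem lt_orderIso_apply (e : O ≃o C)
    (hdom : ∀ c ∈ C, #{y ∈ C | y < c} < #{y ∈ O | y < c}) (x : O) : (x : α) < e x := by
  by_contra! h
  have := hdom _ (e x).2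
  rw [← card_filter_lt_orderIso] at this
  exact this.not_ge (card_filter_lt_mono h)

theorem orderIso_apply_lt (e : O ≃o C) {x : O} {f : α} (hxf : (x : α) < f)
    (hf : #{y ∈ O | y < f} ≤ #{y ∈ C | y < f}) : (e x : α) < f := by
  by_contra! h
  have := (card_filter_lt_lt_of_lt x.2 hxf).trans_le hf
  rw [card_filter_lt_orderIso e] at this
  exact this.not_ge (card_filter_lt_mono h)

def pairingFun (e : O ≃o C) (x : α) : α :=
  if hx : x ∈ O then e ⟨x, hx⟩ else if hx : x ∈ C then e.symm ⟨x, hx⟩ else x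

theorem pairingFun_of_mem_left (e : O ≃o C) {x : α} (hx : x ∈ O) :
    pairingFun e x = e ⟨x, hx⟩ :=
  dif_pos hx

theorem pairingFun_of_mem_right (hOC : Disjoint O C) (e : O ≃o C) {x : α} (hx : x ∈ C) :
    pairingFun e x = e.symm ⟨x, hx⟩ := by
  rw [pairingFun, dif_neg (disjoint_right.1 hOC hx), dif_pos hx]

theorem pairingFun_of_notMem (e : O ≃o C) {x : α} (hO : x ∉ O) (hC : x ∉ C) :
    pairingFun e x = x := by
  rw [pairingFun, dif_neg hO, dif_neg hC]

theorem pairingFun_involutive (hOC : Disjoint O C) (e : O ≃o C) :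
    Function.Involutive (pairingFun e) := by
  intro x
  by_cases hO : x ∈ O
  · rw [pairingFun_of_mem_left e hO, pairingFun_of_mem_right hOC e (e _).2]
    simp
  by_cases hC : x ∈ C
  · rw [pairingFun_of_mem_right hOC e hC, pairingFun_of_mem_left e (e.symm _).2]
    simp
  · rw [pairingFun_of_notMem e hO hC, pairingFun_of_notMem e hO hC]

def pairing (hOC : Disjoint O C) (e : O ≃o C) : Equiv.Perm α :=
  (pairingFun_involutive hOC e).toPerm

variable (hOC : Disjoint O C) (e : O ≃o C)
  (hdom : ∀ c ∈ C, #{y ∈ C | y < c} < #{y ∈ O | y < c})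

include hdom in
theorem le_pairing_iff {x : α} : x ≤ pairing hOC e x ↔ x ∉ C := by
  change x ≤ pairingFun e x ↔ _
  by_cases hO : x ∈ O
  · rw [pairingFun_of_mem_left e hO]
    exact ⟨fun _ => disjoint_left.1 hOC hO, fun _ => (lt_orderIso_apply e hdom ⟨x, hO⟩).le⟩
  by_cases hC : x ∈ C
  · rw [pairingFun_of_mem_right hOC e hC]
    have := lt_orderIso_apply e hdom (e.symm ⟨x, hC⟩)
    simp only [OrderIso.apply_symm_apply] at this
    simpa [hC] using this
  · simp [pairingFun_of_notMem e hO hC, hC]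

theorem strictMonoOn_pairing_right : StrictMonoOn (pairing hOC e) C := by
  intro x hx y hy hxy
  change pairingFun e x < pairingFun e y
  rw [pairingFun_of_mem_right hOC e hx, pairingFun_of_mem_right hOC e hy]
  exact e.symm.strictMono hxy

include hdom in
theorem strictMonoOn_pairing_compl_right
    (hfix : ∀ f ∉ O, f ∉ C → #{y ∈ O | y < f} ≤ #{y ∈ C | y < f}) :
    StrictMonoOn (pairing hOC e) (↑C)ᶜ := by
  intro x hxC y hyC hxy
  replace hxC : x ∉ C := hxC
  replace hyC : y ∉ C := hyC
  change pairingFun e x < pairingFun e y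
  by_cases hx : x ∈ O <;> by_cases hy : y ∈ O
  · rw [pairingFun_of_mem_left e hx, pairingFun_of_mem_left e hy]
    exact e.strictMono hxy
  · rw [pairingFun_of_mem_left e hx, pairingFun_of_notMem e hy hyC]
    exact orderIso_apply_lt e (x := ⟨x, hx⟩) hxy (hfix y hy hyC)
  · rw [pairingFun_of_notMem e hx hxC, pairingFun_of_mem_left e hy]
    exact hxy.trans (lt_orderIso_apply e hdom ⟨y, hy⟩)
  · rwa [pairingFun_of_notMem e hx hxC, pairingFun_of_notMem e hy hyC]

end Pairing

section Level

variable {n : ℕ} (B : Finset (Fin n))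

def level (m : ℕ) : ℤ := prefixCard B m - prefixCard Bᶜ m

def fixedSet : Finset (Fin n) := {f ∈ B | ∀ k ≤ n, (f : ℕ) < k → level B f < level B k}

def openerSet : Finset (Fin n) := B \ fixedSet B

@[simp] theorem level_zero : level B 0 = 0 := by simp [level]

theorem level_succ (i : Fin n) :
    level B (i + 1) = level B i + if i ∈ B then 1 else -1 := by
  rw [level, level, prefixCard_succ, prefixCard_succ]
  by_cases hi : i ∈ B <;> simp [hi] <;> ring

theorem prefixCard_openerSet_add (m : ℕ) :
    prefixCard (openerSet B) m + prefixCard (fixedSet B) m = prefixCard B m := by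
  rw [prefixCard, prefixCard, prefixCard,
    ← card_sdiff_add_card_eq_card (filter_subset_filter _ (filter_subset _ B : fixedSet B ⊆ B))]
  congr 2
  ext i
  simp only [openerSet, fixedSet, mem_filter, mem_sdiff]
  tauto

variable {B}

theorem IsBallot.level_nonneg (hB : IsBallot B) {m : ℕ} (hm : m ≤ n) :
    0 ≤ level B m := by
  have := hB m hm
  rw [level]
  omega

theorem isLeast_level_succ_of_mem_fixedSet {i : Fin n} {c : ℤ} (hF : i ∈ fixedSet B)
    (h : IsLeast (level B '' Set.Icc i n) c) :
    IsLeast (level B '' Set.Icc (i + 1) n) (c + 1) := by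
  obtain ⟨⟨k₀, ⟨hik₀, hk₀n⟩, hk₀⟩, hlow⟩ := h
  obtain ⟨hiB, hup⟩ := mem_filter.1 hF
  have hmin : level B i = c := by
    rcases hik₀.eq_or_lt with heq | hlt
    · rwa [← heq] at hk₀
    · have := hup k₀ hk₀n hlt
      have := hlow ⟨i, ⟨le_rfl, i.isLt.le⟩, rfl⟩
      omega
  refine ⟨⟨i + 1, ⟨le_rfl, i.isLt⟩, by rw [level_succ, if_pos hiB, hmin]⟩, ?_⟩
  rintro _ ⟨k, ⟨hik, hkn⟩, rfl⟩
  have := hup k hkn hik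
  omega

theorem isLeast_level_succ_of_notMem_fixedSet {i : Fin n} {c : ℤ} (hF : i ∉ fixedSet B)
    (h : IsLeast (level B '' Set.Icc i n) c) : IsLeast (level B '' Set.Icc (i + 1) n) c := by
  obtain ⟨⟨k₀, ⟨hik₀, hk₀n⟩, hk₀⟩, hlow⟩ := h
  refine ⟨?_, fun _ ⟨k, ⟨hik, hkn⟩, hk⟩ => hlow ⟨k, ⟨by omega, hkn⟩, hk⟩⟩
  rcases hik₀.eq_or_lt with heq | hlt
  · by_cases hiB : i ∈ B
    · obtain ⟨k, hkn, hik, hk⟩ : ∃ k ≤ n, (i : ℕ) < k ∧ level B k ≤ level B i := by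
        simpa [fixedSet, hiB] using hF
      refine ⟨k, ⟨hik, hkn⟩, le_antisymm ?_ (hlow ⟨k, ⟨hik.le, hkn⟩, rfl⟩)⟩
      rwa [heq, hk₀] at hk
    · have := hlow ⟨i + 1, ⟨by omega, i.isLt⟩, rfl⟩
      rw [level_succ, if_neg hiB, heq, hk₀] at this
      omega
  · exact ⟨k₀, ⟨hlt, hk₀n⟩, hk₀⟩

theorem IsBallot.isLeast_level (hB : IsBallot B) {m : ℕ} (hm : m ≤ n) :
    IsLeast (level B '' Set.Icc m n) (prefixCard (fixedSet B) m) := by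
  induction m with
  | zero =>
    exact ⟨⟨0, ⟨le_rfl, hm⟩, by simp⟩, fun _ ⟨k, hk, hk'⟩ => by
      simpa [← hk'] using hB.level_nonneg hk.2⟩
  | succ m ih =>
    let i : Fin n := ⟨m, hm⟩
    have ih : IsLeast (level B '' Set.Icc i n) (prefixCard (fixedSet B) i) := ih (by omega)
    rw [show m + 1 = i + 1 from rfl, prefixCard_succ]
    by_cases hF : i ∈ fixedSet B
    · simpa [hF] using isLeast_level_succ_of_mem_fixedSet hF ih
    · simpa [hF] using isLeast_level_succ_of_notMem_fixedSet hF ih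

end Level

section Openers

variable {n : ℕ} {B : Finset (Fin n)} (hB : IsBallot B)
include hB

theorem IsBallot.card_fixedSet : (#(fixedSet B) : ℤ) = level B n := by
  obtain ⟨⟨k, hk, hk'⟩, -⟩ := hB.isLeast_level le_rfl
  rw [← prefixCard_of_le _ le_rfl, ← hk', le_antisymm hk.2 hk.1]

theorem IsBallot.prefixCard_fixedSet_le {m : ℕ} (hm : m ≤ n) :
    (prefixCard (fixedSet B) m : ℤ) ≤ level B m :=
  (hB.isLeast_level hm).2 ⟨m, ⟨le_rfl, hm⟩, rfl⟩

theorem IsBallot.prefixCard_fixedSet_of_mem {f : Fin n} (hf : f ∈ fixedSet B) :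
    (prefixCard (fixedSet B) f : ℤ) = level B f := by
  obtain ⟨⟨k, ⟨hfk, hkn⟩, hk⟩, -⟩ := hB.isLeast_level f.isLt.le
  rcases hfk.eq_or_lt with heq | hlt
  · rw [← hk, heq]
  · have := (mem_filter.1 hf).2 k hkn hlt
    have := hB.prefixCard_fixedSet_le f.isLt.le
    omega

theorem IsBallot.card_openerSet : #(openerSet B) = #Bᶜ := by
  have hsplit := prefixCard_openerSet_add B n
  have := hB.card_fixedSet
  simp only [level, prefixCard_of_le _ le_rfl] at hsplit this
  omega

theorem IsBallot.prefixCard_compl_lt_openerSet {c : Fin n} (hc : c ∈ Bᶜ) :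
    prefixCard Bᶜ c < prefixCard (openerSet B) c := by
  have hsplit := prefixCard_openerSet_add B (c + 1)
  have := hB.prefixCard_fixedSet_le (m := c + 1) c.isLt
  have hcO : c ∉ openerSet B := fun h => mem_compl.1 hc (mem_sdiff.1 h).1
  have h₁ : prefixCard Bᶜ (c + 1) = prefixCard Bᶜ c + 1 := by
    rw [prefixCard_succ, if_pos hc]
  have h₂ : prefixCard (openerSet B) (c + 1) = prefixCard (openerSet B) c := by
    rw [prefixCard_succ, if_neg hcO, add_zero]
  simp only [level] at this
  omega

theorem IsBallot.prefixCard_openerSet_le {f : Fin n} (hfO : f ∉ openerSet B) (hfB : f ∉ Bᶜ) :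
    prefixCard (openerSet B) f ≤ prefixCard Bᶜ f := by
  have hf : f ∈ fixedSet B := by
    by_contra h
    exact hfO (mem_sdiff.2 ⟨by simpa using hfB, h⟩)
  have hsplit := prefixCard_openerSet_add B f
  have := hB.prefixCard_fixedSet_of_mem hf
  simp only [level] at this
  omega

theorem IsBallot.exists_involution_weakExcedances_eq :
    ∃ π : Equiv.Perm (Fin n), IsInvolution π ∧ Avoids321 π ∧ weakExcedances π = B := by
  let e : openerSet B ≃o (Bᶜ : Finset (Fin n)) :=
    ((openerSet B).orderIsoOfFin hB.card_openerSet).symm.trans (Bᶜ.orderIsoOfFin rfl)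
  have hOC : Disjoint (openerSet B) Bᶜ := disjoint_compl_right.mono_left sdiff_subset
  have hdom : ∀ c ∈ Bᶜ, #{y ∈ Bᶜ | y < c} < #{y ∈ openerSet B | y < c} := fun c hc => by
    simpa only [prefixCard_val] using hB.prefixCard_compl_lt_openerSet hc
  have hfix : ∀ f ∉ openerSet B, f ∉ Bᶜ →
      #{y ∈ openerSet B | y < f} ≤ #{y ∈ Bᶜ | y < f} := fun f hfO hfB => by
    simpa only [prefixCard_val] using hB.prefixCard_openerSet_le hfO hfB
  refine ⟨pairing hOC e, pairingFun_involutive hOC e,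
    avoids321_of_strictMonoOn (strictMonoOn_pairing_right hOC e)
      (strictMonoOn_pairing_compl_right hOC e hdom hfix), ?_⟩
  ext i
  rw [mem_weakExcedances, le_pairing_iff hOC e hdom, mem_compl, not_not]

end Openers

section Count

variable {n : ℕ}

theorem prefixCard_map_castSucc (S : Finset (Fin n)) (m : ℕ) :
    prefixCard (S.map Fin.castSuccEmb) m = prefixCard S m := by
  rw [prefixCard, filter_map, card_map]
  rfl

theorem prefixCard_insert_last (S : Finset (Fin n)) (m : ℕ) :
    prefixCard (insert (Fin.last n) (S.map Fin.castSuccEmb)) m =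
      prefixCard S m + if n < m then 1 else 0 := by
  rw [prefixCard, filter_insert, Fin.val_last]
  split_ifs with h
  · rw [card_insert_of_notMem (by simp), ← prefixCard, prefixCard_map_castSucc]
  · rw [← prefixCard, prefixCard_map_castSucc, add_zero]

theorem isBallot_map_castSucc_iff {S : Finset (Fin n)} :
    IsBallot (S.map Fin.castSuccEmb) ↔ IsBallot S ∧ n + 1 ≤ 2 * #S := by
  simp only [isBallot_iff_le_two_mul, prefixCard_map_castSucc, Nat.le_succ_iff, or_imp,
    forall_and, forall_eq, prefixCard_of_le S (Nat.le_succ n)]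

theorem isBallot_insert_last_iff {S : Finset (Fin n)} :
    IsBallot (insert (Fin.last n) (S.map Fin.castSuccEmb)) ↔ IsBallot S := by
  simp only [isBallot_iff_le_two_mul, prefixCard_insert_last, Nat.le_succ_iff, or_imp,
    forall_and, forall_eq, Nat.lt_succ_self, if_true, prefixCard_of_le S (Nat.le_succ n)]
  refine ⟨fun h m hm => by simpa [hm.not_gt] using h.1 m hm,
    fun h => ⟨fun m hm => by simpa [hm.not_gt] using h m hm, ?_⟩⟩
  have := h n le_rfl
  rw [prefixCard_of_le S le_rfl] at this
  omega

variable (n) in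
def ballotCount (k : ℕ) : ℕ :=
  #{B ∈ powersetCard k (univ : Finset (Fin n)) | IsBallot B}

theorem ballotCount_succ_succ (k : ℕ) (hk : n + 1 ≤ 2 * (k + 1)) :
    ballotCount (n + 1) (k + 1) = ballotCount n (k + 1) + ballotCount n k := by
  have hlast : ∀ {j} {B : Finset (Fin (n + 1))},
      B ∈ powersetCard j (univ.map Fin.castSuccEmb) → Fin.last n ∉ B := fun hB h => by
    simpa using (mem_powersetCard.1 hB).1 h
  rw [ballotCount, Fin.univ_castSuccEmb, cons_eq_insert, powersetCard_succ_insert (by simp),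
    filter_union, card_union_of_disjoint, filter_image, card_image_of_injOn]
  · rw [powersetCard_map, filter_map, card_map, powersetCard_map, filter_map, card_map]
    congr 2 <;> apply filter_congr <;> intro S hS
    · simp [isBallot_map_castSucc_iff, (mem_powersetCard.1 hS).2, hk]
    · simp [isBallot_insert_last_iff]
  · intro A hA B hB h
    rw [← erase_insert (hlast (mem_filter.1 hA).1), h, erase_insert (hlast (mem_filter.1 hB).1)]
  · refine disjoint_left.2 fun B hB hB' => ?_
    obtain ⟨A, -, rfl⟩ := mem_image.1 (mem_filter.1 hB').1
    exact hlast (mem_filter.1 hB).1 (mem_insert_self _ _)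

theorem ballotCount_eq_zero {k : ℕ} (hk : 2 * k < n) : ballotCount n k = 0 := by
  rw [ballotCount, card_eq_zero, filter_eq_empty_iff]
  intro B hB hBallot
  have := isBallot_iff_le_two_mul.1 hBallot n le_rfl
  rw [prefixCard_of_le B le_rfl, (mem_powersetCard.1 hB).2] at this
  omega

theorem ballotCount_add_choose : ∀ {n k : ℕ}, n ≤ 2 * k →
    ballotCount n k + n.choose (k + 1) = n.choose k
  | 0, 0, _ => by decide
  | 0, k + 1, _ => by rw [ballotCount, powersetCard_eq_empty.2 (by simp)]; simp
  | n + 1, 0, h => by omega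
  | n + 1, k + 1, h => by
    have ih := ballotCount_add_choose (n := n) (k := k + 1) (by omega)
    rw [ballotCount_succ_succ k h, Nat.choose_succ_succ', Nat.choose_succ_succ']
    rcases le_or_gt n (2 * k) with h' | h'
    · have := ballotCount_add_choose h'
      omega
    · obtain rfl : n = 2 * k + 1 := by omega
      have := ballotCount_eq_zero h'
      have := Nat.choose_symm_half k
      omega

theorem sum_Ico_ballotCount {j : ℕ} (hj : n ≤ 2 * j) :
    ∑ k ∈ Ico j (n + 1), ballotCount n k = n.choose j := by
  induction hd : n + 1 - j generalizing j with
  | zero => rw [Ico_eq_empty (by omega), sum_empty, Nat.choose_eq_zero_of_lt (by omega)]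
  | succ d ih =>
    rw [sum_eq_sum_Ico_succ_bot (by omega), ih (by omega) (by omega),
      ballotCount_add_choose hj]

variable (n) in
theorem card_isBallot : #{B : Finset (Fin n) | IsBallot B} = n.choose (n / 2) := by
  rw [card_eq_sum_card_fiberwise (f := card) (t := Ico (n - n / 2) (n + 1)) ?_,
    ← Nat.choose_symm (Nat.div_le_self n 2), ← sum_Ico_ballotCount (by omega)]
  · refine sum_congr rfl fun k _ => ?_
    rw [ballotCount, filter_filter]
    congr 1
    ext B
    simp [and_comm]
  · intro B hB
    have := isBallot_iff_le_two_mul.1 (mem_filter.1 hB).2 n le_rfl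
    have := card_le_univ B
    rw [prefixCard_of_le B le_rfl] at *
    simp only [Fintype.card_fin, coe_Ico, Set.mem_Ico] at *
    omega

end Count

/-- The number of 321-avoiding involutions of {1,…,n} is C(n, ⌊n/2⌋). -/
theorem count_involutions_avoiding_321 (n : ℕ) :
    Nat.card {π : Equiv.Perm (Fin n) // IsInvolution π ∧ Avoids321 π} =
      Nat.choose n (n / 2) := by
  let toBallot (π : {π : Equiv.Perm (Fin n) // IsInvolution π ∧ Avoids321 π}) :
      {B : Finset (Fin n) // IsBallot B} :=
    ⟨weakExcedances π.1, isBallot_weakExcedances π.2.1⟩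
  have hbij : Function.Bijective toBallot := by
    refine ⟨fun π π' h => Subtype.ext <|
      eq_of_weakExcedances_eq π.2.1 π'.2.1 π.2.2 π'.2.2 (congrArg Subtype.val h), fun B => ?_⟩
    obtain ⟨π, hinv, h321, hE⟩ := B.2.exists_involution_weakExcedances_eq
    exact ⟨⟨π, hinv, h321⟩, Subtype.ext hE⟩
  rw [Nat.card_eq_of_bijective toBallot hbij, Nat.card_eq_fintype_card, Fintype.card_subtype,
    card_isBallot]
end

section
/- For every m ≥ 1, the number of 321-avoiding involutions π of {1,…,2m} with π(1) ≠ 1 equals the number of 321-avoiding involutions π of {1,…,2m} with π(1) = 1. -/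
/-!
Read the word `i ↦ (i ≤ π i)` of a permutation as a lattice path, with up steps at weak
excedances and down steps at deficiencies. For an involution this is a ballot path (it never goes
below `0`). If `π` also avoids 321, its fixed points are exactly the up steps that the path never
comes back down across, and the remaining up steps are paired in increasing order with the down
steps. This identifies 321-avoiding involutions with ballot paths, `π 0 = 0` meaning that the
path never returns to height `0`. For paths of even length, toggling the down step of the first
return to `0` is a bijection onto the ballot paths that never return to `0`.
-/

open Finset

namespace Involution321

variable {n : ℕ}

section Below

def below (s : Finset (Fin n)) (p : ℕ) : ℕ := #{i ∈ s | i.val < p}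

lemma below_zero (s : Finset (Fin n)) : below s 0 = 0 := by
  simp [below]

lemma below_succ (s : Finset (Fin n)) {p : ℕ} (hp : p < n) :
    below s (p + 1) = below s p + if (⟨p, hp⟩ : Fin n) ∈ s then 1 else 0 := by
  have : {i ∈ s | i.val < p + 1} = {i ∈ s | i.val < p} ∪ {i ∈ s | i = ⟨p, hp⟩} := by
    ext i
    simp only [mem_union, mem_filter, Fin.ext_iff, ← and_or_left, Nat.lt_succ_iff_lt_or_eq]
  rw [below, this, card_union_of_disjoint (disjoint_filter.2 fun i _ h h' => by simp_all),
    filter_eq']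
  split_ifs <;> simp [below]

lemma below_of_le (s : Finset (Fin n)) {p : ℕ} (hp : n ≤ p) : below s p = #s := by
  rw [below, filter_true_of_mem fun i _ => i.isLt.trans_le hp]

lemma below_mono (s : Finset (Fin n)) {p q : ℕ} (h : p ≤ q) : below s p ≤ below s q :=
  card_le_card fun i hi => by
    simp only [mem_filter] at hi ⊢
    exact ⟨hi.1, hi.2.trans_le h⟩

lemma below_lt_below_of_mem {s : Finset (Fin n)} {x : Fin n} (hx : x ∈ s) {p : ℕ}
    (h : x.val < p) : below s x < below s p := by
  have := below_succ s x.isLt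
  simp only [Fin.eta, hx, if_true] at this
  have := below_mono s (show x.val + 1 ≤ p from h)
  omega

lemma lt_of_below_lt {s : Finset (Fin n)} {x y : Fin n} (h : below s x < below s y) : x < y :=
  lt_of_not_ge fun hyx => h.not_ge (below_mono s hyx)

lemma below_eq_below_add_card {s : Finset (Fin n)} {p q : ℕ} (hpq : p ≤ q) :
    below s q = below s p + #{i ∈ s | p ≤ i.val ∧ i.val < q} := by
  rw [below, below, ← card_union_of_disjoint (disjoint_filter.2 fun i _ h h' => by omega),
    ← filter_or]
  congr 1
  exact filter_congr fun i _ => by omega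

lemma below_union {s t : Finset (Fin n)} (hst : Disjoint s t) (p : ℕ) :
    below (s ∪ t) p = below s p + below t p := by
  rw [below, filter_union, card_union_of_disjoint (disjoint_filter_filter hst)]; rfl

lemma below_orderIso {s t : Finset (Fin n)} (e : s ≃o t) (x : s) :
    below s x = below t (e x) := by
  refine card_bij' (fun i hi => e ⟨i, (mem_filter.1 hi).1⟩)
    (fun j hj => e.symm ⟨j, (mem_filter.1 hj).1⟩) (fun i hi => ?_) (fun j hj => ?_)
    (fun i hi => by simp) (fun j hj => by simp)
  · refine mem_filter.2 ⟨(e _).2, ?_⟩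
    exact Fin.lt_def.1 (e.lt_iff_lt.2 (Subtype.mk_lt_mk.2 (Fin.lt_def.2 (mem_filter.1 hi).2)))
  · refine mem_filter.2 ⟨(e.symm _).2, ?_⟩
    have : e.symm ⟨j, (mem_filter.1 hj).1⟩ < x := by
      rw [← e.lt_iff_lt, e.apply_symm_apply]
      exact Subtype.mk_lt_mk.2 (Fin.lt_def.2 (mem_filter.1 hj).2)
    exact Fin.lt_def.1 this

end Below

section Ballot

variable {w : Fin n → Bool}

def upSteps (w : Fin n → Bool) : Finset (Fin n) := univ.filter fun i => w i = true

def downSteps (w : Fin n → Bool) : Finset (Fin n) := univ.filter fun i => w i = false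

@[simp] lemma mem_upSteps {i : Fin n} : i ∈ upSteps w ↔ w i = true := by simp [upSteps]

@[simp] lemma mem_downSteps {i : Fin n} : i ∈ downSteps w ↔ w i = false := by simp [downSteps]

def height (w : Fin n → Bool) (p : ℕ) : ℤ := below (upSteps w) p - below (downSteps w) p

def IsBallot (w : Fin n → Bool) : Prop := ∀ p, 0 ≤ height w p

@[simp] lemma height_zero (w : Fin n → Bool) : height w 0 = 0 := by
  simp [height, below_zero]

lemma height_succ (w : Fin n → Bool) {p : ℕ} (hp : p < n) :
    height w (p + 1) = height w p + if w ⟨p, hp⟩ then 1 else -1 := by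
  simp only [height, below_succ _ hp, mem_upSteps, mem_downSteps]
  cases w ⟨p, hp⟩ <;> simp <;> ring

lemma height_of_le (w : Fin n → Bool) {p : ℕ} (hp : n ≤ p) : height w p = height w n := by
  simp only [height, below_of_le _ hp, below_of_le _ le_rfl]

lemma height_length (w : Fin n → Bool) : height w n = 2 * #(upSteps w) - n := by
  have h := card_filter_add_card_filter_not (s := (univ : Finset (Fin n))) fun i => w i = true
  simp only [Bool.not_eq_true, card_univ, Fintype.card_fin] at h
  simp only [height, below_of_le _ le_rfl, upSteps, downSteps]
  omega

/-- The minimum of the height over the times `p, …, n`; the `insert n` keeps the index set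
nonempty, so that this is `height w n` when `n < p`. -/
def futureMin (w : Fin n → Bool) (p : ℕ) : ℤ :=
  (insert n (Icc p n)).inf' (insert_nonempty _ _) (height w)

lemma futureMin_le_height {p q : ℕ} (hpq : p ≤ q) (hq : q ≤ n) :
    futureMin w p ≤ height w q :=
  inf'_le _ (by simp [hpq, hq])

lemma exists_height_eq_futureMin {p : ℕ} (hp : p ≤ n) :
    ∃ q, p ≤ q ∧ q ≤ n ∧ height w q = futureMin w p := by
  obtain ⟨q, hq, hq'⟩ := exists_mem_eq_inf' (insert_nonempty n (Icc p n)) (height w)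
  simp only [mem_insert, mem_Icc] at hq
  exact ⟨q, by omega, by omega, hq'.symm⟩

lemma futureMin_length : futureMin w n = height w n := by
  simp [futureMin]

lemma futureMin_eq_min {p : ℕ} (hp : p < n) :
    futureMin w p = min (height w p) (futureMin w (p + 1)) := by
  have : insert n (Icc p n) = insert p (insert n (Icc (p + 1) n)) := by
    ext q
    simp only [mem_insert, mem_Icc]
    omega
  simp only [futureMin, this]
  rw [inf'_insert]

lemma futureMin_zero (hw : IsBallot w) : futureMin w 0 = 0 := by
  obtain ⟨q, -, hq, hq'⟩ := exists_height_eq_futureMin (w := w) (Nat.zero_le n)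
  have := futureMin_le_height (w := w) le_rfl (Nat.zero_le n)
  have := hw q
  simp_all only [height_zero]
  omega

def IsUnmatched (w : Fin n → Bool) (u : Fin n) : Prop :=
  ∀ q, u.val < q → q ≤ n → height w u < height w q

lemma isUnmatched_iff {u : Fin n} : IsUnmatched w u ↔ height w u < futureMin w (u + 1) := by
  constructor
  · intro hu
    obtain ⟨q, hq, hqn, hq'⟩ := exists_height_eq_futureMin (w := w) u.isLt
    exact hq' ▸ hu q hq hqn
  · exact fun hu q hq hqn => hu.trans_le (futureMin_le_height hq hqn)

def TouchesZero (w : Fin n → Bool) : Prop := ∃ p, 0 < p ∧ p ≤ n ∧ height w p ≤ 0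

lemma isUnmatched_zero_iff (h0 : 0 < n) : IsUnmatched w ⟨0, h0⟩ ↔ ¬ TouchesZero w := by
  simp [IsUnmatched, TouchesZero]

lemma IsUnmatched.up {u : Fin n} (hu : IsUnmatched w u) : w u = true := by
  have := hu (u + 1) (Nat.lt_succ_self _) u.isLt
  rw [height_succ w u.isLt] at this
  revert this
  cases w u <;> simp

open Classical in
noncomputable def unmatchedUps (w : Fin n → Bool) : Finset (Fin n) := univ.filter (IsUnmatched w)

open Classical in
noncomputable def matchedUps (w : Fin n → Bool) : Finset (Fin n) :=
  (upSteps w).filter fun u => ¬ IsUnmatched w u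

@[simp] lemma mem_unmatchedUps {u : Fin n} : u ∈ unmatchedUps w ↔ IsUnmatched w u := by
  simp [unmatchedUps]

@[simp] lemma mem_matchedUps {u : Fin n} :
    u ∈ matchedUps w ↔ w u = true ∧ ¬ IsUnmatched w u := by
  simp [matchedUps]

lemma upSteps_eq_union : upSteps w = matchedUps w ∪ unmatchedUps w := by
  ext u
  have := @IsUnmatched.up _ w u
  simp only [mem_upSteps, mem_union, mem_matchedUps, mem_unmatchedUps]
  tauto

lemma disjoint_matchedUps_unmatchedUps : Disjoint (matchedUps w) (unmatchedUps w) :=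
  disjoint_left.2 fun u hm hu => by simp_all

lemma disjoint_matchedUps_downSteps : Disjoint (matchedUps w) (downSteps w) :=
  disjoint_left.2 fun u hm hd => by simp_all

lemma below_unmatchedUps (hw : IsBallot w) {p : ℕ} (hp : p ≤ n) :
    below (unmatchedUps w) p = futureMin w p := by
  induction p with
  | zero => simp [below_zero, futureMin_zero hw]
  | succ p ih =>
    have hpn : p < n := hp
    have hstep := height_succ w hpn
    have hmin := futureMin_eq_min (w := w) hpn
    have hle := futureMin_le_height (w := w) le_rfl hp
    have hih := ih hpn.le
    simp only [below_succ _ hpn, mem_unmatchedUps, isUnmatched_iff]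
    split_ifs at hstep ⊢ <;> push_cast <;> omega

lemma height_eq_below_matchedUps_sub (hw : IsBallot w) {p : ℕ} (hp : p ≤ n) :
    height w p = below (matchedUps w) p - below (downSteps w) p + futureMin w p := by
  rw [← below_unmatchedUps hw hp, height, upSteps_eq_union,
    below_union disjoint_matchedUps_unmatchedUps]
  push_cast
  ring

lemma below_matchedUps_eq_of_isUnmatched (hw : IsBallot w) {u : Fin n} (hu : IsUnmatched w u) :
    below (matchedUps w) u = below (downSteps w) u := by
  have h := height_eq_below_matchedUps_sub hw u.isLt.le
  have := futureMin_eq_min (w := w) u.isLt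
  rw [isUnmatched_iff] at hu
  omega

lemma below_downSteps_lt_below_matchedUps (hw : IsBallot w) {d : Fin n} (hd : w d = false) :
    below (downSteps w) d < below (matchedUps w) d := by
  have h := height_eq_below_matchedUps_sub hw d.isLt.le
  have hstep := height_succ w d.isLt
  have := futureMin_le_height (w := w) (Nat.le_add_right (d : ℕ) 1) d.isLt
  simp only [Fin.eta, hd, Bool.false_eq_true, if_false] at hstep
  omega

lemma card_matchedUps_eq (hw : IsBallot w) : #(matchedUps w) = #(downSteps w) := by
  have h := height_eq_below_matchedUps_sub hw le_rfl
  rw [futureMin_length, below_of_le _ le_rfl, below_of_le _ le_rfl] at h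
  omega

lemma card_unmatchedUps (hw : IsBallot w) : (#(unmatchedUps w) : ℤ) = height w n := by
  rw [← below_of_le _ le_rfl, below_unmatchedUps hw le_rfl, futureMin_length]

end Ballot

section Pairing

variable {α : Type*} [DecidableEq α] {A D : Finset α}

def pairing (e : A ≃ D) (x : α) : α :=
  if hx : x ∈ A then e ⟨x, hx⟩ else if hx : x ∈ D then e.symm ⟨x, hx⟩ else x

lemma pairing_of_mem_left (e : A ≃ D) {x : α} (hx : x ∈ A) : pairing e x = e ⟨x, hx⟩ :=
  dif_pos hx

lemma pairing_of_mem_right (e : A ≃ D) (hAD : Disjoint A D) {x : α} (hx : x ∈ D) :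
    pairing e x = e.symm ⟨x, hx⟩ := by
  rw [pairing, dif_neg (disjoint_right.1 hAD hx), dif_pos hx]

lemma pairing_of_notMem (e : A ≃ D) {x : α} (hA : x ∉ A) (hD : x ∉ D) : pairing e x = x := by
  rw [pairing, dif_neg hA, dif_neg hD]

lemma pairing_involutive (e : A ≃ D) (hAD : Disjoint A D) : Function.Involutive (pairing e) := by
  intro x
  by_cases hA : x ∈ A
  · rw [pairing_of_mem_left e hA, pairing_of_mem_right e hAD (e _).2]
    simp
  by_cases hD : x ∈ D
  · rw [pairing_of_mem_right e hAD hD, pairing_of_mem_left e (e.symm _).2]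
    simp
  rw [pairing_of_notMem e hA hD, pairing_of_notMem e hA hD]

end Pairing

lemma avoids321_of_strictMonoOn {π : Equiv.Perm (Fin n)} (hup : StrictMonoOn π {x | x ≤ π x})
    (hdown : StrictMonoOn π {x | π x < x}) : Avoids321 π := by
  rintro ⟨i, j, k, hij, hjk, hkj, hji⟩
  rcases le_or_gt i (π i) with hi | hi <;> rcases le_or_gt j (π j) with hj | hj <;>
    rcases le_or_gt k (π k) with hk | hk
  all_goals first
    | exact (hup hi hj hij).not_gt hji | exact (hup hi hk (hij.trans hjk)).not_gt (hkj.trans hji)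
    | exact (hup hj hk hjk).not_gt hkj | exact (hdown hi hj hij).not_gt hji
    | exact (hdown hi hk (hij.trans hjk)).not_gt (hkj.trans hji)
    | exact (hdown hj hk hjk).not_gt hkj

section Decode

variable {w : Fin n → Bool}

noncomputable def matchIso (hw : IsBallot w) : matchedUps w ≃o downSteps w :=
  ((matchedUps w).orderIsoOfFin (card_matchedUps_eq hw)).symm.trans
    ((downSteps w).orderIsoOfFin rfl)

lemma lt_matchIso (hw : IsBallot w) (a : matchedUps w) : (a : Fin n) < matchIso hw a := by
  have hd := (matchIso hw a).2
  rw [mem_downSteps] at hd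
  apply lt_of_below_lt (s := matchedUps w)
  calc below (matchedUps w) a = below (downSteps w) (matchIso hw a) := below_orderIso _ a
    _ < _ := below_downSteps_lt_below_matchedUps hw hd

lemma matchIso_lt_of_isUnmatched (hw : IsBallot w) (a : matchedUps w) {u : Fin n}
    (hu : IsUnmatched w u) (hau : (a : Fin n) < u) : (matchIso hw a : Fin n) < u := by
  apply lt_of_below_lt (s := downSteps w)
  calc below (downSteps w) (matchIso hw a) = below (matchedUps w) a := (below_orderIso _ a).symm
    _ < below (matchedUps w) u := below_lt_below_of_mem a.2 hau
    _ = _ := below_matchedUps_eq_of_isUnmatched hw hu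

noncomputable def decode (hw : IsBallot w) : Equiv.Perm (Fin n) :=
  (pairing_involutive (matchIso hw).toEquiv disjoint_matchedUps_downSteps).toPerm

lemma decode_of_mem_matchedUps (hw : IsBallot w) {x : Fin n} (hx : x ∈ matchedUps w) :
    decode hw x = matchIso hw ⟨x, hx⟩ :=
  pairing_of_mem_left _ hx

lemma decode_of_mem_downSteps (hw : IsBallot w) {x : Fin n} (hx : x ∈ downSteps w) :
    decode hw x = (matchIso hw).symm ⟨x, hx⟩ :=
  pairing_of_mem_right _ disjoint_matchedUps_downSteps hx

lemma decode_of_isUnmatched (hw : IsBallot w) {x : Fin n} (hx : IsUnmatched w x) :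
    decode hw x = x :=
  pairing_of_notMem _ (by simp [hx]) (by simp [hx.up])

lemma isInvolution_decode (hw : IsBallot w) : IsInvolution (decode hw) :=
  pairing_involutive _ disjoint_matchedUps_downSteps

lemma decode_lt_iff (hw : IsBallot w) (x : Fin n) : decode hw x < x ↔ w x = false := by
  constructor
  · intro h
    by_contra hx
    rw [Bool.not_eq_false] at hx
    by_cases hu : IsUnmatched w x
    · exact h.ne (decode_of_isUnmatched hw hu)
    · have hm : x ∈ matchedUps w := mem_matchedUps.2 ⟨hx, hu⟩
      exact h.not_gt (decode_of_mem_matchedUps hw hm ▸ lt_matchIso hw ⟨x, hm⟩)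
  · intro hx
    have hd : x ∈ downSteps w := mem_downSteps.2 hx
    rw [decode_of_mem_downSteps hw hd]
    simpa using lt_matchIso hw ((matchIso hw).symm ⟨x, hd⟩)

lemma avoids321_decode (hw : IsBallot w) : Avoids321 (decode hw) := by
  refine avoids321_of_strictMonoOn (fun x hx y hy hxy => ?_) (fun x hx y hy hxy => ?_)
  · have classify : ∀ z, z ≤ decode hw z → z ∈ matchedUps w ∨ IsUnmatched w z := by
      intro z hz
      have hup : w z = true := by
        rw [← Bool.not_eq_false, ← decode_lt_iff hw z]
        exact hz.not_gt
      by_cases hu : IsUnmatched w z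
      · exact Or.inr hu
      · exact Or.inl (mem_matchedUps.2 ⟨hup, hu⟩)
    rcases classify x hx with hxm | hxu <;> rcases classify y hy with hym | hyu
    · simp only [decode_of_mem_matchedUps hw hxm, decode_of_mem_matchedUps hw hym]
      exact (matchIso hw).strictMono (Subtype.mk_lt_mk.2 hxy)
    · rw [decode_of_mem_matchedUps hw hxm, decode_of_isUnmatched hw hyu]
      exact matchIso_lt_of_isUnmatched hw ⟨x, hxm⟩ hyu hxy
    · rw [decode_of_isUnmatched hw hxu, decode_of_mem_matchedUps hw hym]
      exact hxy.trans (lt_matchIso hw ⟨y, hym⟩)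
    · rwa [decode_of_isUnmatched hw hxu, decode_of_isUnmatched hw hyu]
  · have hxd : x ∈ downSteps w := mem_downSteps.2 ((decode_lt_iff hw x).1 hx)
    have hyd : y ∈ downSteps w := mem_downSteps.2 ((decode_lt_iff hw y).1 hy)
    simp only [decode_of_mem_downSteps hw hxd, decode_of_mem_downSteps hw hyd]
    exact (matchIso hw).symm.strictMono (Subtype.mk_lt_mk.2 hxy)

end Decode

section Encode

variable {π : Equiv.Perm (Fin n)}

def encode (π : Equiv.Perm (Fin n)) : Fin n → Bool := fun i => decide (i ≤ π i)

@[simp] lemma encode_eq_true {i : Fin n} : encode π i = true ↔ i ≤ π i := by simp [encode]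

@[simp] lemma encode_eq_false {i : Fin n} : encode π i = false ↔ π i < i := by simp [encode]

lemma encode_decode {w : Fin n → Bool} (hw : IsBallot w) : encode (decode hw) = w := by
  funext x
  cases hx : w x
  · exact encode_eq_false.2 ((decode_lt_iff hw x).2 hx)
  · rw [encode_eq_true, ← not_lt, decode_lt_iff, hx]
    decide

lemma isBallot_encode (hπ : IsInvolution π) : IsBallot (encode π) := by
  intro p
  have : below (downSteps (encode π)) p ≤ below (upSteps (encode π)) p := by
    refine card_le_card_of_injOn π (fun d hd => ?_) π.injective.injOn
    simp only [mem_coe, mem_filter, mem_downSteps, encode_eq_false,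
      mem_upSteps, encode_eq_true, hπ d] at hd ⊢
    exact ⟨hd.1.le, (Fin.lt_def.1 hd.1).trans hd.2⟩
  rw [height]
  omega

lemma strictMonoOn_of_avoids321 (hπ : IsInvolution π) (hav : Avoids321 π) :
    StrictMonoOn π {x | x < π x} := by
  intro x hx y hy hxy
  refine lt_of_not_ge fun hyx => hav ⟨x, y, π y, hxy, hy, ?_, ?_⟩
  · rw [hπ y]
    exact hy
  · exact lt_of_le_of_ne hyx fun h => hxy.ne (π.injective h.symm)

/-- No pair `{d, π d}` straddles the fixed point `u` (that would be a 321), so `π` maps the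
down steps in `[u, q)` injectively to up steps in `(u, q)`. -/
lemma isUnmatched_encode_of_fixed (hπ : IsInvolution π) (hav : Avoids321 π) {u : Fin n}
    (hu : π u = u) : IsUnmatched (encode π) u := by
  intro q huq hq
  have hu_mem : u ∈ {i ∈ upSteps (encode π) | u.val ≤ i.val ∧ i.val < q} := by
    simp [hu, huq]
  have hinj : #{i ∈ downSteps (encode π) | u.val ≤ i.val ∧ i.val < q} ≤
      #({i ∈ upSteps (encode π) | u.val ≤ i.val ∧ i.val < q}.erase u) := by
    refine card_le_card_of_injOn π (fun d hd => ?_) π.injective.injOn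
    simp only [mem_coe, mem_filter, mem_downSteps, encode_eq_false] at hd
    obtain ⟨hd, hud, hdq⟩ := hd
    have hud' : u < d := lt_of_le_of_ne (Fin.le_def.2 hud) fun h => hd.ne (by rw [← h, hu])
    have hπd : u < π d := by
      refine lt_of_not_ge fun hdu => ?_
      have hdu' : π d < u := lt_of_le_of_ne hdu fun h => hud'.ne (by rw [← hπ d, h, hu])
      exact hav ⟨π d, u, d, hdu', hud', by rwa [hu], by rwa [hu, hπ d]⟩
    simp only [mem_coe, mem_erase, mem_filter, mem_upSteps, encode_eq_true, hπ d]
    exact ⟨hπd.ne', hd.le, hπd.le, (Fin.lt_def.1 hd).trans hdq⟩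
  rw [card_erase_of_mem hu_mem] at hinj
  have := card_pos.2 ⟨u, hu_mem⟩
  simp only [height, below_eq_below_add_card (s := upSteps _) huq.le,
    below_eq_below_add_card (s := downSteps _) huq.le]
  omega

lemma unmatchedUps_encode (hπ : IsInvolution π) (hav : Avoids321 π) :
    unmatchedUps (encode π) = univ.filter fun x => π x = x := by
  symm
  refine eq_of_subset_of_card_le (fun u hu => ?_) ?_
  · exact mem_unmatchedUps.2 (isUnmatched_encode_of_fixed hπ hav (mem_filter.1 hu).2)
  have hsplit := card_filter_add_card_filter_not (s := upSteps (encode π)) fun x => π x = x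
  have hfix : (upSteps (encode π)).filter (fun x => π x = x) = univ.filter fun x => π x = x := by
    ext x
    simp +contextual
  have hexc : #((upSteps (encode π)).filter fun x => ¬ π x = x) = #(downSteps (encode π)) := by
    refine card_nbij' π π (fun x hx => ?_) (fun x hx => ?_) (fun x _ => hπ x) (fun x _ => hπ x)
    · simp only [mem_coe, mem_filter, mem_upSteps, encode_eq_true] at hx
      simpa [hπ x] using lt_of_le_of_ne hx.1 (Ne.symm hx.2)
    · simp only [mem_coe, mem_downSteps, encode_eq_false] at hx
      simp [hπ x, hx.le, hx.ne']
  have := card_unmatchedUps (isBallot_encode hπ)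
  rw [height, below_of_le _ le_rfl, below_of_le _ le_rfl] at this
  rw [hfix, hexc] at hsplit
  omega

end Encode

section Bijection

variable {π : Equiv.Perm (Fin n)}

lemma isUnmatched_encode_iff (hπ : IsInvolution π) (hav : Avoids321 π) {x : Fin n} :
    IsUnmatched (encode π) x ↔ π x = x := by
  rw [← mem_unmatchedUps, unmatchedUps_encode hπ hav, mem_filter]
  simp

lemma mem_matchedUps_encode (hπ : IsInvolution π) (hav : Avoids321 π) {x : Fin n} :
    x ∈ matchedUps (encode π) ↔ x < π x := by
  rw [mem_matchedUps, encode_eq_true, isUnmatched_encode_iff hπ hav, lt_iff_le_and_ne, ne_comm]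

/-- `π` restricts to an order isomorphism from the excedances onto the deficiencies, and order
isomorphisms between finite linear orders are unique. -/
lemma matchIso_encode (hπ : IsInvolution π) (hav : Avoids321 π) (a : matchedUps (encode π)) :
    (matchIso (isBallot_encode hπ) a : Fin n) = π a := by
  have hmaps : ∀ a : matchedUps (encode π), π a ∈ downSteps (encode π) := fun a => by
    rw [mem_downSteps, encode_eq_false, hπ]
    exact (mem_matchedUps_encode hπ hav).1 a.2
  let e : matchedUps (encode π) ≃o downSteps (encode π) :=
    StrictMono.orderIsoOfSurjective (fun a => ⟨π a, hmaps a⟩)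
      (fun a b hab => strictMonoOn_of_avoids321 hπ hav ((mem_matchedUps_encode hπ hav).1 a.2)
        ((mem_matchedUps_encode hπ hav).1 b.2) hab)
      (fun d => ⟨⟨π d, (mem_matchedUps_encode hπ hav).2 (by
        rw [hπ]; exact encode_eq_false.1 (mem_downSteps.1 d.2))⟩, Subtype.ext (hπ d)⟩)
  rw [Subsingleton.elim (matchIso _) e]
  rfl

lemma decode_encode (hπ : IsInvolution π) (hav : Avoids321 π) :
    decode (isBallot_encode hπ) = π := by
  ext x
  rcases lt_trichotomy x (π x) with hx | hx | hx
  · rw [decode_of_mem_matchedUps _ ((mem_matchedUps_encode hπ hav).2 hx), matchIso_encode hπ hav]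
  · rw [decode_of_isUnmatched _ ((isUnmatched_encode_iff hπ hav).2 hx.symm), ← hx]
  · have hd : x ∈ downSteps (encode π) := by simpa using hx
    have hm : π x ∈ matchedUps (encode π) := (mem_matchedUps_encode hπ hav).2 (by rwa [hπ])
    have : (matchIso (isBallot_encode hπ)).symm ⟨x, hd⟩ = ⟨π x, hm⟩ :=
      (OrderIso.symm_apply_eq _).2 (Subtype.ext (by rw [matchIso_encode hπ hav, hπ]))
    rw [decode_of_mem_downSteps _ hd, this]

lemma card_involutions_eq_card_ballot (R : Equiv.Perm (Fin n) → Prop)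
    (Z : (Fin n → Bool) → Prop)
    (hRZ : ∀ π, IsInvolution π → Avoids321 π → (R π ↔ Z (encode π))) :
    Nat.card {π : Equiv.Perm (Fin n) // IsInvolution π ∧ Avoids321 π ∧ R π} =
      Nat.card {w : Fin n → Bool // IsBallot w ∧ Z w} :=
  Nat.card_congr
    { toFun := fun π => ⟨encode π, isBallot_encode π.2.1, (hRZ _ π.2.1 π.2.2.1).1 π.2.2.2⟩
      invFun := fun w => ⟨decode w.2.1, isInvolution_decode _, avoids321_decode _,
        (hRZ _ (isInvolution_decode _) (avoids321_decode _)).2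
          ((encode_decode w.2.1).symm ▸ w.2.2)⟩
      left_inv := fun π => Subtype.ext (decode_encode π.2.1 π.2.2.1)
      right_inv := fun w => Subtype.ext (encode_decode w.2.1) }

lemma fixes_zero_iff (hπ : IsInvolution π) (hav : Avoids321 π) (h0 : 0 < n) :
    π ⟨0, h0⟩ = ⟨0, h0⟩ ↔ ¬ TouchesZero (encode π) := by
  rw [← isUnmatched_encode_iff hπ hav, isUnmatched_zero_iff]

end Bijection

section Toggle

variable {w : Fin n → Bool}

def toggle (w : Fin n → Bool) (i : Fin n) : Fin n → Bool := Function.update w i (!w i)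

@[simp] lemma toggle_toggle (w : Fin n → Bool) (i : Fin n) : toggle (toggle w i) i = w := by
  simp [toggle]

lemma height_toggle (w : Fin n → Bool) (i : Fin n) (p : ℕ) :
    height (toggle w i) p = height w p + if i.val < p then (if w i then -2 else 2) else 0 := by
  induction p with
  | zero => simp
  | succ p ih =>
    rcases lt_or_ge p n with hp | hp
    · rw [height_succ _ hp, height_succ _ hp, ih]
      by_cases hpi : (⟨p, hp⟩ : Fin n) = i
      · subst hpi
        cases hwp : w ⟨p, hp⟩ <;> simp [toggle, hwp] <;> ring
      · have : i.val ≠ p := fun h => hpi (Fin.ext h.symm)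
        simp only [toggle, Function.update_of_ne hpi]
        split_ifs <;> omega
    · have e : ∀ v : Fin n → Bool, height v (p + 1) = height v p := fun v => by
        rw [height_of_le v hp, height_of_le v (by omega)]
      rw [e, e, ih]
      simp only [show i.val < p + 1 ↔ i.val < p by omega]

def returnStep (h : TouchesZero w) : Fin n :=
  ⟨Nat.find h - 1, by obtain ⟨h₁, h₂, -⟩ := Nat.find_spec h; omega⟩

lemma returnStep_add_one (h : TouchesZero w) : (returnStep h).val + 1 = Nat.find h := by
  obtain ⟨h₁, -⟩ := Nat.find_spec h
  simp only [returnStep]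
  omega

lemma pos_height_of_le_returnStep (h : TouchesZero w) {q : ℕ} (hq0 : 0 < q)
    (hq : q ≤ returnStep h) : 0 < height w q := by
  have := returnStep_add_one h
  have := Nat.find_min h (m := q) (by omega)
  simp only [not_and, not_le] at this
  exact this hq0 (by obtain ⟨-, h₂, -⟩ := Nat.find_spec h; omega)

lemma returnStep_spec (hw : IsBallot w) (h : TouchesZero w) :
    w (returnStep h) = false ∧ height w (returnStep h) = 1 := by
  have hstep := height_succ w (returnStep h).isLt
  rw [returnStep_add_one] at hstep
  have := (Nat.find_spec h).2.2
  have := hw (Nat.find h)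
  have := hw (returnStep h)
  simp only [Fin.eta] at hstep
  cases hr : w (returnStep h) <;> simp [hr] at hstep ⊢ <;> omega

lemma height_toggle_returnStep (hw : IsBallot w) (h : TouchesZero w) (p : ℕ) :
    height (toggle w (returnStep h)) p = height w p + if (returnStep h).val < p then 2 else 0 := by
  simp [height_toggle, (returnStep_spec hw h).1]

lemma isBallot_toggle_returnStep (hw : IsBallot w) (h : TouchesZero w) :
    IsBallot (toggle w (returnStep h)) := fun p => by
  rw [height_toggle_returnStep hw h]
  have := hw p
  split_ifs <;> omega

lemma not_touchesZero_toggle_returnStep (hw : IsBallot w) (h : TouchesZero w) :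
    ¬ TouchesZero (toggle w (returnStep h)) := by
  rintro ⟨p, hp0, hpn, hp⟩
  rw [height_toggle_returnStep hw h] at hp
  have := hw p
  split_ifs at hp with hrp
  · omega
  · have := pos_height_of_le_returnStep h hp0 (by omega)
    omega

noncomputable def lastLow (w : Fin n → Bool) : ℕ :=
  Nat.findGreatest (fun p => height w p ≤ 1) n

lemma height_lastLow_le : height w (lastLow w) ≤ 1 :=
  Nat.findGreatest_spec (P := fun p => height w p ≤ 1) (Nat.zero_le n) (by simp)

lemma two_le_height_of_lastLow_lt {q : ℕ} (hq : lastLow w < q) (hqn : q ≤ n) :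
    2 ≤ height w q := by
  have := Nat.findGreatest_is_greatest hq hqn
  simp only [not_le] at this
  omega

lemma lastLow_lt (h2 : 2 ≤ height w n) : lastLow w < n := by
  refine lt_of_le_of_ne (Nat.findGreatest_le n) fun h => ?_
  have := height_lastLow_le (w := w)
  rw [h] at this
  omega

noncomputable def riseStep (h2 : 2 ≤ height w n) : Fin n := ⟨lastLow w, lastLow_lt h2⟩

lemma riseStep_spec (h2 : 2 ≤ height w n) :
    w (riseStep h2) = true ∧ height w (riseStep h2) = 1 := by
  have hstep := height_succ w (lastLow_lt h2)
  have := two_le_height_of_lastLow_lt (w := w) (Nat.lt_add_one _) (lastLow_lt h2)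
  have := height_lastLow_le (w := w)
  simp only [riseStep]
  cases hr : w ⟨lastLow w, lastLow_lt h2⟩ <;> simp [hr] at hstep ⊢ <;> omega

lemma height_toggle_riseStep (h2 : 2 ≤ height w n) (p : ℕ) :
    height (toggle w (riseStep h2)) p = height w p - if (riseStep h2).val < p then 2 else 0 := by
  simp only [height_toggle, (riseStep_spec h2).1]
  split_ifs <;> ring

lemma isBallot_toggle_riseStep (hw : IsBallot w) (h2 : 2 ≤ height w n) :
    IsBallot (toggle w (riseStep h2)) := fun p => by
  rw [height_toggle_riseStep h2]
  split_ifs with hp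
  · rcases le_or_gt p n with hpn | hpn
    · have := two_le_height_of_lastLow_lt hp hpn
      omega
    · rw [height_of_le w hpn.le]
      omega
  · have := hw p
    omega

lemma height_toggle_riseStep_add_one (h2 : 2 ≤ height w n) :
    height (toggle w (riseStep h2)) (riseStep h2 + 1) = 0 := by
  rw [height_toggle_riseStep h2, if_pos (Nat.lt_add_one _), height_succ w (riseStep h2).isLt]
  simp [(riseStep_spec h2).1, (riseStep_spec h2).2]

lemma touchesZero_toggle_riseStep (h2 : 2 ≤ height w n) :
    TouchesZero (toggle w (riseStep h2)) :=
  ⟨riseStep h2 + 1, Nat.succ_pos _, (riseStep h2).isLt, (height_toggle_riseStep_add_one h2).le⟩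

lemma riseStep_toggle_returnStep (hw : IsBallot w) (h : TouchesZero w)
    (h2 : 2 ≤ height (toggle w (returnStep h)) n) : riseStep h2 = returnStep h := by
  refine Fin.ext (Nat.findGreatest_eq_iff.2
    ⟨(returnStep h).isLt.le, fun _ => ?_, fun q hq hqn => ?_⟩)
  · simp [height_toggle_returnStep hw h, (returnStep_spec hw h).2]
  · rw [height_toggle_returnStep hw h, if_pos hq]
    have := hw q
    omega

lemma returnStep_toggle_riseStep (hz : ¬ TouchesZero w) (h2 : 2 ≤ height w n)
    (h : TouchesZero (toggle w (riseStep h2))) : returnStep h = riseStep h2 := by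
  have hfind : Nat.find h = riseStep h2 + 1 := by
    refine (Nat.find_eq_iff h).2 ⟨⟨Nat.succ_pos _, (riseStep h2).isLt,
      (height_toggle_riseStep_add_one h2).le⟩, ?_⟩
    rintro q hq ⟨hq0, hqn, hq'⟩
    rw [height_toggle_riseStep h2, if_neg (by omega), sub_zero] at hq'
    exact hz ⟨q, hq0, hqn, hq'⟩
  ext
  have := returnStep_add_one h
  omega

lemma two_le_height_length (hn : Even n) (h0 : 0 < n) (hz : ¬ TouchesZero w) :
    2 ≤ height w n := by
  have := height_length w
  have : ¬ height w n ≤ 0 := fun h => hz ⟨n, h0, le_rfl, h⟩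
  obtain ⟨m, rfl⟩ := hn
  omega

/-- Toggling the step before the first return to `0` lifts the rest of the path by `2`;
toggling the last step from height `1` to `2` undoes this. -/
noncomputable def toggleEquiv (hn : Even n) (h0 : 0 < n) :
    {w : Fin n → Bool // IsBallot w ∧ TouchesZero w} ≃
      {w : Fin n → Bool // IsBallot w ∧ ¬ TouchesZero w} where
  toFun w := ⟨toggle w.1 (returnStep w.2.2), isBallot_toggle_returnStep w.2.1 w.2.2,
    not_touchesZero_toggle_returnStep w.2.1 w.2.2⟩
  invFun w := ⟨toggle w.1 (riseStep (two_le_height_length hn h0 w.2.2)),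
    isBallot_toggle_riseStep w.2.1 _, touchesZero_toggle_riseStep _⟩
  left_inv := by
    rintro ⟨w, hw, hz⟩
    apply Subtype.ext
    dsimp only
    rw [riseStep_toggle_returnStep hw hz, toggle_toggle]
  right_inv := by
    rintro ⟨w, hw, hz⟩
    apply Subtype.ext
    dsimp only
    rw [returnStep_toggle_riseStep hz, toggle_toggle]

end Toggle

end Involution321

/-- Among 321-avoiding involutions of {1,…,2m}, those not fixing the first point
are equinumerous with those fixing it. -/
theorem card_not_fixing_one_eq_card_fixing_one (m : ℕ) (hm : 1 ≤ m) :
    Nat.card {π : Equiv.Perm (Fin (2 * m)) // IsInvolution π ∧ Avoids321 π ∧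
        π ⟨0, by omega⟩ ≠ ⟨0, by omega⟩} =
      Nat.card {π : Equiv.Perm (Fin (2 * m)) // IsInvolution π ∧ Avoids321 π ∧
        π ⟨0, by omega⟩ = ⟨0, by omega⟩} := by
  have h0 : 0 < 2 * m := by omega
  open Involution321 in
  calc _ = Nat.card {w : Fin (2 * m) → Bool // IsBallot w ∧ TouchesZero w} :=
        card_involutions_eq_card_ballot _ _ fun π hπ hav => (fixes_zero_iff hπ hav h0).not_left
    _ = Nat.card {w : Fin (2 * m) → Bool // IsBallot w ∧ ¬ TouchesZero w} :=
        Nat.card_congr (toggleEquiv (even_two_mul m) h0)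
    _ = _ := (card_involutions_eq_card_ballot _ _ fun π hπ hav => fixes_zero_iff hπ hav h0).symm
end

section
/- Let π be a 321-avoiding involution of {1,…,n} and suppose there exists k with 1 ≤ k < n such that π({1,…,k}) = {n−k+1,…,n} (π is skew-decomposable). Then n = 2k and π(i) = i + k for all 1 ≤ i ≤ k and π(i) = i − k for all k < i ≤ n. -/
/-- A skew-decomposable 321-avoiding involution of {1,…,n} has even length n = 2k and
equals the shift (m+1)(m+2)…(2m)12…m. -/
theorem skew_decomposable_involution_structure {n : ℕ} (π : Equiv.Perm (Fin n))
    (hinv : IsInvolution π) (hav : Avoids321 π)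
    (k : ℕ) (hk1 : 1 ≤ k) (hk2 : k < n)
    (hblock : (π : Fin n → Fin n) '' {i : Fin n | (i : ℕ) < k} =
      {i : Fin n | n - k ≤ (i : ℕ)}) :
    n = 2 * k ∧ ∀ i : Fin n,
      ((i : ℕ) < k → (π i : ℕ) = (i : ℕ) + k) ∧
      (k ≤ (i : ℕ) → (π i : ℕ) = (i : ℕ) - k) := by
  have hB : ∀ i : Fin n, (i : ℕ) < k → n - k ≤ (π i : ℕ) := by
    intro i hi
    have : π i ∈ {j : Fin n | n - k ≤ (j : ℕ)} := by
      rw [← hblock]; exact ⟨i, hi, rfl⟩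
    exact this
  have hB' : ∀ i : Fin n, n - k ≤ (i : ℕ) → (π i : ℕ) < k := by
    intro i hi
    have hmem : i ∈ ((π : Fin n → Fin n) '' {j : Fin n | (j : ℕ) < k}) := by
      rw [hblock]; exact hi
    obtain ⟨j, hj, hji⟩ := hmem
    have : π i = j := by rw [← hji]; exact hinv j
    rw [this]; exact hj
  have hnle : ¬ n < 2 * k := by
    intro hlt
    have hk2' : 2 ≤ k := by omega
    have hl : (n : ℕ) - 1 < n := by omega
    set l : Fin n := ⟨n - 1, hl⟩ with hldef
    have hπl : (π l : ℕ) < k := hB' l (by simp [hldef]; omega)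
    have hπl2 : (π l : ℕ) < n - k := by
      by_contra hc
      push_neg at hc
      have := hB' (π l) hc
      rw [hinv l] at this
      simp [hldef] at this; omega
    have hjn : n - k < n := by omega
    set j : Fin n := ⟨n - k, hjn⟩ with hjdef
    have hπj1 : n - k ≤ (π j : ℕ) := hB j (by simp [hjdef]; omega)
    have hπj2 : (π j : ℕ) < k := hB' j (by simp [hjdef])
    refine hav ⟨π l, j, l, ?_, ?_, ?_, ?_⟩
    · show (π l : ℕ) < (j : ℕ); simp [hjdef]; omega
    · show (j : ℕ) < (l : ℕ); simp [hjdef, hldef]; omega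
    · show (π l : ℕ) < (π j : ℕ); omega
    · show (π j : ℕ) < (π (π l) : ℕ); rw [hinv l]; simp [hldef]; omega
  have hnge : ¬ 2 * k < n := by
    intro hlt
    have hm : k < n := hk2
    set m : Fin n := ⟨k, hm⟩ with hmdef
    have h1 : ¬ (π m : ℕ) < k := by
      intro hc
      have := hB (π m) hc
      rw [hinv m] at this
      simp [hmdef] at this; omega
    have h2 : ¬ n - k ≤ (π m : ℕ) := by
      intro hc
      have := hB' (π m) hc
      rw [hinv m] at this
      simp [hmdef] at this
    have h0 : (0 : ℕ) < n := by omega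
    set i0 : Fin n := ⟨0, h0⟩ with hi0def
    have hπ0 : n - k ≤ (π i0 : ℕ) := hB i0 (by simp [hi0def]; omega)
    have hln : n - 1 < n := by omega
    set l : Fin n := ⟨n - 1, hln⟩ with hldef
    have hπl : (π l : ℕ) < k := hB' l (by simp [hldef]; omega)
    refine hav ⟨i0, m, l, ?_, ?_, ?_, ?_⟩
    · show (i0 : ℕ) < (m : ℕ); simp [hi0def, hmdef]; omega
    · show (m : ℕ) < (l : ℕ); simp [hmdef, hldef]; omega
    · show (π l : ℕ) < (π m : ℕ); omega
    · show (π m : ℕ) < (π i0 : ℕ); omega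
  have hn : n = 2 * k := by omega
  have hB2 : ∀ i : Fin n, (i : ℕ) < k → k ≤ (π i : ℕ) := by
    intro i hi; have := hB i hi; omega
  have hB2' : ∀ i : Fin n, k ≤ (i : ℕ) → (π i : ℕ) < k := by
    intro i hi; exact hB' i (by omega)
  have hmono : ∀ i j : Fin n, (i : ℕ) < (j : ℕ) → (j : ℕ) < k →
      (π i : ℕ) < (π j : ℕ) := by
    intro i j hij hjk
    by_contra hc
    push_neg at hc
    have hne : π j ≠ π i := by
      intro he
      exact absurd (π.injective he) (by intro h; rw [h] at hij; omega)
    have hlt : (π j : ℕ) < (π i : ℕ) := lt_of_le_of_ne hc (by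
      intro he; exact hne (Fin.ext he))
    refine hav ⟨i, j, π i, ?_, ?_, ?_, ?_⟩
    · exact hij
    · show (j : ℕ) < (π i : ℕ)
      have := hB2 i (by omega); omega
    · show (π (π i) : ℕ) < (π j : ℕ)
      rw [hinv i]
      have := hB2 j hjk; omega
    · exact hlt
  have hlow : ∀ m : ℕ, ∀ hm : m < n, m < k → k + m ≤ (π ⟨m, hm⟩ : ℕ) := by
    intro m
    induction m with
    | zero => intro hm h0; simpa using hB2 ⟨0, hm⟩ h0
    | succ p ih =>
      intro hm hpk
      have hpn : p < n := by omega
      have h1 := ih hpn (by omega)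
      have h2 := hmono ⟨p, hpn⟩ ⟨p + 1, hm⟩ (by simp) (by simpa)
      omega
  have hhigh : ∀ d : ℕ, ∀ m : ℕ, m + d + 1 = k → ∀ hm : m < n,
      (π ⟨m, hm⟩ : ℕ) ≤ k + m := by
    intro d
    induction d with
    | zero =>
      intro m hmk hm
      have := (π ⟨m, hm⟩).isLt
      omega
    | succ d ih =>
      intro m hmk hm
      have hm1 : m + 1 < n := by omega
      have h1 := ih (m + 1) (by omega) hm1
      have h2 := hmono ⟨m, hm⟩ ⟨m + 1, hm1⟩ (by simp) (by simp; omega)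
      omega
  have hfirst : ∀ i : Fin n, (i : ℕ) < k → (π i : ℕ) = (i : ℕ) + k := by
    intro i hi
    have h1 := hlow (i : ℕ) i.isLt hi
    have h2 := hhigh (k - 1 - (i : ℕ)) (i : ℕ) (by omega) i.isLt
    have : (⟨(i : ℕ), i.isLt⟩ : Fin n) = i := Fin.ext rfl
    rw [this] at h1 h2
    omega
  refine ⟨hn, fun i => ⟨hfirst i, ?_⟩⟩
  intro hi
  have hπi : (π i : ℕ) < k := hB2' i hi
  have := hfirst (π i) hπi
  rw [hinv i] at this
  omega
end

section
/- Let π be an involution of {1,…,n}. Then π avoids 321 if and only if for all x < y with x ≤ π(x) and y ≤ π(y), one has π(x) < π(y). (Writing π as a product of cycles (m_i, M_i) with m_i ≤ M_i and m_1 < m_2 < ⋯ < m_h, this says π avoids 321 exactly when M_1 < M_2 < ⋯ < M_h.) -/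
/-- An involution avoids 321 iff the maxima of its cycles, ordered by their minima,
are increasing: for x < y with x ≤ π x and y ≤ π y one has π x < π y. -/
theorem involution_avoids_321_iff {n : ℕ} (π : Equiv.Perm (Fin n))
    (hinv : IsInvolution π) :
    Avoids321 π ↔ ∀ x y : Fin n, x < y → x ≤ π x → y ≤ π y → π x < π y := by
  constructor
  · intro hav x y hxy hx hy
    by_contra h
    push_neg at h
    have hne : π y ≠ π x := fun he => absurd (π.injective he) (ne_of_gt hxy)
    have hlt : π y < π x := lt_of_le_of_ne h hne
    exact hav ⟨x, y, π x, hxy, lt_of_le_of_lt hy hlt, by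
      rw [hinv x]; exact ⟨lt_of_lt_of_le hxy hy, hlt⟩⟩
  · rintro h ⟨i, j, k, hij, hjk, hkj, hji⟩
    by_cases hj : j ≤ π j
    · -- i is low: i < j ≤ π j < π i
      have hi : i ≤ π i := le_of_lt (lt_trans (lt_of_lt_of_le hij hj) hji)
      exact absurd (h i j hij hi hj) (not_lt.mpr (le_of_lt hji))
    · push_neg at hj
      -- π k < π j < j < k, both high
      have hkj' : π k < π j := hkj
      have h1 : π k ≤ π (π k) := by rw [hinv k]; exact le_of_lt (lt_trans (lt_trans hkj hj) hjk)
      have h2 : π j ≤ π (π j) := by rw [hinv j]; exact le_of_lt hj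
      have := h (π k) (π j) hkj' h1 h2
      rw [hinv k, hinv j] at this
      exact absurd this (not_lt.mpr (le_of_lt hjk))
end

section
/- If σ is a simple 321-avoiding involution of {1,…,n} with n > 2, then σ has no fixed points, i.e. σ(i) ≠ i for every i. -/
/-- A simple 321-avoiding involution of length n > 2 has no fixed points. -/
theorem simple_involution_no_fixed_points {n : ℕ} (hn : 2 < n)
    (σ : Equiv.Perm (Fin n)) (hinv : IsInvolution σ) (hav : Avoids321 σ)
    (hs : IsSimplePerm σ) :
    ∀ i : Fin n, σ i ≠ i := by
  intro f hf
  -- everything below f maps below f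
  have hA : ∀ j : Fin n, j < f → σ j < f := by
    intro j hj
    by_contra h
    push_neg at h
    have hne : σ j ≠ f := fun he => absurd (σ.injective (he.trans hf.symm)) hj.ne
    have hlt : f < σ j := lt_of_le_of_ne h (Ne.symm hne)
    exact hav ⟨j, f, σ j, hj, hlt, by rw [hinv j, hf]; exact hj,
      by rw [hf]; exact hlt⟩
  -- everything above f maps above f
  have hB : ∀ j : Fin n, f < j → f < σ j := by
    intro j hj
    by_contra h
    push_neg at h
    have hne : σ j ≠ f := fun he => absurd (σ.injective (he.trans hf.symm)) hj.ne'
    have hlt : σ j < f := lt_of_le_of_ne h hne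
    exact hav ⟨σ j, f, j, hlt, hj, by rw [hf]; exact hlt,
      by rw [hf, hinv j]; exact hj⟩
  have him : ∀ I : Finset (Fin n), (∀ x ∈ I, σ x ∈ I) → I.image σ = I := by
    intro I h
    refine Finset.eq_of_subset_of_card_le (fun y hy => ?_) ?_
    · obtain ⟨x, hx, rfl⟩ := Finset.mem_image.mp hy
      exact h x hx
    · rw [Finset.card_image_of_injective _ σ.injective]
  have hIio : (Finset.Iio f).image σ = Finset.Iio f :=
    him _ (fun x hx => Finset.mem_Iio.mpr (hA x (Finset.mem_Iio.mp hx)))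
  have hIic : (Finset.Iic f).image σ = Finset.Iic f := by
    refine him _ (fun x hx => Finset.mem_Iic.mpr ?_)
    rcases lt_or_eq_of_le (Finset.mem_Iic.mp hx) with h | h
    · exact (hA x h).le
    · rw [h, hf]
  have hIoi : (Finset.Ioi f).image σ = Finset.Ioi f :=
    him _ (fun x hx => Finset.mem_Ioi.mpr (hB x (Finset.mem_Ioi.mp hx)))
  have cIio : IsConsecutive (Finset.Iio f) := by
    intro x hx y hy z h1 h2
    exact Finset.mem_Iio.mpr (lt_of_le_of_lt h2 (Finset.mem_Iio.mp hy))
  have cIic : IsConsecutive (Finset.Iic f) := by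
    intro x hx y hy z h1 h2
    exact Finset.mem_Iic.mpr (le_trans h2 (Finset.mem_Iic.mp hy))
  have cIoi : IsConsecutive (Finset.Ioi f) := by
    intro x hx y hy z h1 h2
    exact Finset.mem_Ioi.mpr (lt_of_lt_of_le (Finset.mem_Ioi.mp hx) h1)
  have h1 := hs _ cIio (by rw [hIio]; exact cIio)
  have h2 := hs _ cIic (by rw [hIic]; exact cIic)
  have h3 := hs _ cIoi (by rw [hIoi]; exact cIoi)
  rw [Fin.card_Iio] at h1
  rw [Fin.card_Iic] at h2
  rw [Fin.card_Ioi] at h3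
  have hfn : (f : ℕ) < n := f.isLt
  omega
end

section
/- If σ is a simple 321-avoiding involution of {1,…,n} with n > 2, then n is even. -/
section Aux

variable {n : ℕ} (σ : Equiv.Perm (Fin n))

/-- Everything left of a fixed point stays left of it. -/
lemma aux_fixA (hinv : IsInvolution σ) (hav : Avoids321 σ)
    {f : Fin n} (hf : σ f = f) : ∀ i, i < f → σ i < f := by
  intro i hi
  by_contra h
  push_neg at h
  have hne : σ i ≠ f := by
    intro he
    rw [← hf] at he
    exact absurd (σ.injective he) (ne_of_lt hi)
  have hlt : f < σ i := lt_of_le_of_ne h (Ne.symm hne)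
  exact hav ⟨i, f, σ i, hi, hlt, by rw [hinv i, hf]; exact hi, by rw [hf]; exact hlt⟩

/-- Everything right of a fixed point stays right of it. -/
lemma aux_fixA' (hinv : IsInvolution σ) (hav : Avoids321 σ)
    {f : Fin n} (hf : σ f = f) : ∀ i, f < i → f < σ i := by
  intro i hi
  by_contra h
  push_neg at h
  have hne : σ i ≠ f := by
    intro he
    rw [← hf] at he
    exact absurd (σ.injective he) (ne_of_lt hi).symm
  have hlt : σ i < f := lt_of_le_of_ne h hne
  exact hav ⟨σ i, f, i, hlt, hi, by rw [hf]; exact hlt, by rw [hf, hinv i]; exact hi⟩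

lemma aux_fixB (hinv : IsInvolution σ) (hav : Avoids321 σ) (hs : IsSimplePerm σ)
    {f : Fin n} (hf : σ f = f) : (f : ℕ) ≤ 1 := by
  have hcons : IsConsecutive (Finset.Iio f) := by
    intro x hx y hy z _ hzy
    rw [Finset.mem_Iio] at hy ⊢
    exact lt_of_le_of_lt hzy hy
  have himg : (Finset.Iio f).image σ = Finset.Iio f := by
    apply Finset.eq_of_subset_of_card_le
    · intro j hj
      rw [Finset.mem_image] at hj
      obtain ⟨i, hi, rfl⟩ := hj
      rw [Finset.mem_Iio] at hi ⊢
      exact aux_fixA σ hinv hav hf i hi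
    · rw [Finset.card_image_of_injective _ σ.injective]
  have := hs (Finset.Iio f) hcons (by rw [himg]; exact hcons)
  rw [Fin.card_Iio] at this
  have := f.isLt
  omega

lemma aux_fixC (hinv : IsInvolution σ) (hav : Avoids321 σ) (hs : IsSimplePerm σ)
    {f : Fin n} (hf : σ f = f) : n ≤ (f : ℕ) + 2 := by
  have hcons : IsConsecutive (Finset.Ioi f) := by
    intro x hx y hy z hxz _
    rw [Finset.mem_Ioi] at hx ⊢
    exact lt_of_lt_of_le hx hxz
  have himg : (Finset.Ioi f).image σ = Finset.Ioi f := by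
    apply Finset.eq_of_subset_of_card_le
    · intro j hj
      rw [Finset.mem_image] at hj
      obtain ⟨i, hi, rfl⟩ := hj
      rw [Finset.mem_Ioi] at hi ⊢
      exact aux_fixA' σ hinv hav hf i hi
    · rw [Finset.card_image_of_injective _ σ.injective]
  have := hs (Finset.Ioi f) hcons (by rw [himg]; exact hcons)
  rw [Fin.card_Ioi] at this
  have := f.isLt
  omega

/-- A fixed-point-free involution on `Fin n` forces `n` even. -/
lemma aux_even_of_fpf (hinv : IsInvolution σ) (hfpf : ∀ i, σ i ≠ i) : Even n := by
  classical
  set S := Finset.univ.filter (fun i : Fin n => i < σ i) with hS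
  set T := Finset.univ.filter (fun i : Fin n => σ i < i) with hT
  have hcard : S.card = T.card := by
    apply Finset.card_bij (fun i _ => σ i)
    · intro a ha
      rw [hS, Finset.mem_filter] at ha
      rw [hT, Finset.mem_filter]
      refine ⟨Finset.mem_univ _, ?_⟩
      rw [hinv a]
      exact ha.2
    · intro a _ b _ h
      exact σ.injective h
    · intro b hb
      rw [hT, Finset.mem_filter] at hb
      refine ⟨σ b, ?_, hinv b⟩
      rw [hS, Finset.mem_filter]
      refine ⟨Finset.mem_univ _, ?_⟩
      rw [hinv b]
      exact hb.2
  have hTeq : Finset.univ.filter (fun i : Fin n => ¬ i < σ i) = T := by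
    ext i
    rw [hT, Finset.mem_filter, Finset.mem_filter]
    constructor
    · rintro ⟨h1, h2⟩
      exact ⟨h1, lt_of_le_of_ne (not_lt.mp h2) (hfpf i)⟩
    · rintro ⟨h1, h2⟩
      exact ⟨h1, not_lt.mpr h2.le⟩
  have hsum : S.card + T.card = n := by
    rw [← hTeq, Finset.card_filter_add_card_filter_not, Finset.card_univ,
      Fintype.card_fin]
  exact ⟨S.card, by omega⟩

end Aux

/-- A simple 321-avoiding involution of length n > 2 has even length. -/
theorem simple_involution_even_length {n : ℕ} (hn : 2 < n)
    (σ : Equiv.Perm (Fin n)) (hinv : IsInvolution σ) (hav : Avoids321 σ)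
    (hs : IsSimplePerm σ) :
    Even n := by
  by_contra hodd
  have hfix : ∃ f, σ f = f := by
    by_contra h
    push_neg at h
    exact hodd (aux_even_of_fpf σ hinv h)
  obtain ⟨f, hf⟩ := hfix
  have hB := aux_fixB σ hinv hav hs hf
  have hC := aux_fixC σ hinv hav hs hf
  have hf1 : (f : ℕ) = 1 := by omega
  set z : Fin n := ⟨0, by omega⟩ with hzdef
  have hz0 : (z : ℕ) = 0 := rfl
  have hz : σ z = z := by
    have h := aux_fixA σ hinv hav hf z (by rw [Fin.lt_def]; omega)
    rw [Fin.lt_def] at h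
    exact Fin.ext (by omega)
  have := aux_fixC σ hinv hav hs hz
  omega
end

section
/- If π is a 321-avoiding involution of {1,…,n} with n > 1 that is neither sum-decomposable nor skew-decomposable, then n is even. (Such π is a simple involution of length > 2 or an inflation of one, and these always have even length.) -/
/-- A 321-avoiding involution of length n > 1 that is neither sum- nor
skew-decomposable has even length. -/
theorem indecomposable_involution_even_length {n : ℕ} (hn : 1 < n)
    (π : Equiv.Perm (Fin n)) (hinv : IsInvolution π) (hav : Avoids321 π)
    (hsum : ¬ SumDecomposable π) (hskew : ¬ SkewDecomposable π) :
    Even n := by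
  -- Step 1: π has no fixed points.
  have hfix : ∀ i : Fin n, π i ≠ i := by
    intro f hf
    apply hsum
    by_cases hlast : (f : ℕ) = n - 1
    · -- f is the last element; the initial segment {i < n-1} is invariant
      refine ⟨n - 1, by omega, by omega, ?_⟩
      have hmap : ∀ i : Fin n, (i : ℕ) < n - 1 → ((π i : Fin n) : ℕ) < n - 1 := by
        intro i hi
        have hne : π i ≠ f := by
          intro h
          have : i = f := by
            have := hinv i
            rw [h, hf] at this
            exact this.symm ▸ rfl
          omega
        have : ((π i : Fin n) : ℕ) ≠ n - 1 := fun h => hne (Fin.ext (h.trans hlast.symm))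
        have := (π i).isLt
        omega
      ext x
      constructor
      · rintro ⟨y, hy, rfl⟩
        exact hmap y hy
      · intro hx
        exact ⟨π x, hmap _ (by simpa using hx), hinv x⟩
    · -- f is not the last element; {i ≤ f} is invariant
      refine ⟨(f : ℕ) + 1, by omega, by have := f.isLt; omega, ?_⟩
      have hmap : ∀ i : Fin n, (i : ℕ) < (f : ℕ) + 1 → ((π i : Fin n) : ℕ) < (f : ℕ) + 1 := by
        intro i hi
        rcases eq_or_ne i f with rfl | hne
        · rw [hf]; omega
        · have hif : i < f := by
            have : (i : ℕ) ≠ (f : ℕ) := fun h => hne (Fin.ext h)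
            exact Fin.lt_def.mpr (by omega)
          have hπif : π i ≠ f := by
            intro h
            exact hne (by rw [← hinv i, h, hf])
          by_contra hgt
          push_neg at hgt
          have hfπ : f < π i := by
            have : (f : ℕ) ≠ ((π i : Fin n) : ℕ) := fun h => hπif (Fin.ext h.symm)
            exact Fin.lt_def.mpr (by omega)
          exact hav ⟨i, f, π i, hif, hfπ, by rw [hinv i, hf]; exact hif,
            by rw [hf]; exact hfπ⟩
      ext x
      constructor
      · rintro ⟨y, hy, rfl⟩
        exact hmap y hy
      · intro hx
        exact ⟨π x, hmap _ (by simpa using hx), hinv x⟩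
  -- Step 2: a fixed-point-free involution implies even cardinality.
  classical
  have hsplit : (Finset.univ : Finset (Fin n)) =
      (Finset.univ.filter fun i => i < π i) ∪ (Finset.univ.filter fun i => π i < i) := by
    ext i
    simp only [Finset.mem_union, Finset.mem_filter, Finset.mem_univ, true_and]
    rcases lt_trichotomy i (π i) with h | h | h
    · exact ⟨fun _ => Or.inl h, fun _ => trivial⟩
    · exact absurd h.symm (hfix i)
    · exact ⟨fun _ => Or.inr h, fun _ => trivial⟩
  have hdisj : Disjoint (Finset.univ.filter fun i => i < π i)
      (Finset.univ.filter fun i => π i < i) := by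
    rw [Finset.disjoint_filter]
    intro i _ h1 h2
    exact absurd (h1.trans h2) (lt_irrefl i)
  have hcard : ((Finset.univ.filter fun i => i < π i) : Finset (Fin n)).card =
      ((Finset.univ.filter fun i => π i < i) : Finset (Fin n)).card := by
    apply Finset.card_bij (fun i _ => π i)
    · intro a ha
      simp only [Finset.mem_filter, Finset.mem_univ, true_and] at ha ⊢
      rw [hinv a]; exact ha
    · intro a ha b hb h
      exact π.injective h
    · intro b hb
      simp only [Finset.mem_filter, Finset.mem_univ, true_and] at hb
      exact ⟨π b, by simp only [Finset.mem_filter, Finset.mem_univ, true_and, hinv b]; exact hb,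
        hinv b⟩
  have : n = 2 * ((Finset.univ.filter fun i => i < π i) : Finset (Fin n)).card := by
    have := Finset.card_union_of_disjoint hdisj
    rw [← hsplit] at this
    simp only [Finset.card_univ, Fintype.card_fin] at this
    omega
  exact ⟨_, by rw [this, two_mul]⟩
end

section
/- There exist simple 321-avoiding involutions of arbitrarily large length: for every natural number N there exist n > N and a permutation σ of {1,…,n} that is a simple 321-avoiding involution. (Explicitly, for every n ≥ 3 there is such a σ of length 4n−6.) -/
def ff (m i : ℕ) : ℕ :=
  if i = 0 then 2 else if i = 2 then 0 else if i = m - 3 then m - 1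
  else if i = m - 1 then m - 3 else if i % 2 = 1 then i + 3 else i - 3

lemma ff_lt {m i : ℕ} (hm : 6 ≤ m) (he : m % 2 = 0) (hi : i < m) : ff m i < m := by
  unfold ff; split_ifs <;> omega

lemma ff_zero {m : ℕ} : ff m 0 = 2 := by unfold ff; simp

lemma ff_two {m : ℕ} (hm : 6 ≤ m) : ff m 2 = 0 := by
  unfold ff; split_ifs <;> first | omega | tauto

lemma ff_m3 {m : ℕ} (hm : 6 ≤ m) (he : m % 2 = 0) : ff m (m - 3) = m - 1 := by
  unfold ff; split_ifs <;> first | omega | tauto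

lemma ff_m1 {m : ℕ} (hm : 6 ≤ m) (he : m % 2 = 0) : ff m (m - 1) = m - 3 := by
  unfold ff; split_ifs <;> first | omega | tauto

lemma ff_odd {m i : ℕ} (hm : 6 ≤ m) (he : m % 2 = 0) (h1 : i % 2 = 1) (h2 : i ≤ m - 5) :
    ff m i = i + 3 := by
  unfold ff; split_ifs <;> first | omega | tauto

lemma ff_even {m i : ℕ} (hm : 6 ≤ m) (he : m % 2 = 0) (h1 : i % 2 = 0) (h2 : 4 ≤ i)
    (h3 : i ≤ m - 2) : ff m i = i - 3 := by
  unfold ff; split_ifs <;> first | omega | tauto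

lemma ff_inv {m i : ℕ} (hm : 6 ≤ m) (he : m % 2 = 0) (hi : i < m) : ff m (ff m i) = i := by
  by_cases h0 : i = 0
  · subst h0; rw [ff_zero, ff_two hm]
  by_cases h2 : i = 2
  · subst h2; rw [ff_two hm, ff_zero]
  by_cases h3 : i = m - 3
  · subst h3; rw [ff_m3 hm he, ff_m1 hm he]
  by_cases h1 : i = m - 1
  · subst h1; rw [ff_m1 hm he, ff_m3 hm he]
  by_cases hp : i % 2 = 1
  · rw [ff_odd hm he hp (by omega)]
    rw [ff_even hm he (i := i + 3) (by omega) (by omega) (by omega)]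
    omega
  · rw [ff_even hm he (i := i) (by omega) (by omega) (by omega)]; rw [ff_odd hm he (i := i - 3) (by omega) (by omega)]; omega

lemma ff_desc {m i j : ℕ} (hm : 6 ≤ m) (he : m % 2 = 0) (hij : i < j) (hj : j < m) :
    ff m j < ff m i → i < ff m i ∧ ff m j ≤ j := by
  unfold ff; split_ifs <;> omega

lemma ff_spread {m a b : ℕ} (hm : 6 ≤ m) (he : m % 2 = 0) (hab : a < b) (hb : b < m)
    (hno : ¬(a = 0 ∧ b = m - 1)) :
    ∃ i j, a ≤ i ∧ i ≤ b ∧ a ≤ j ∧ j ≤ b ∧ ff m j + (b - a) < ff m i := by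
  by_cases hb1 : b = m - 1
  · subst hb1
    by_cases ha2 : a = m - 2
    · refine ⟨m - 1, m - 2, by omega, by omega, by omega, by omega, ?_⟩
      rw [ff_m1 hm he, ff_even hm he (i := m - 2) (by omega) (by omega) (by omega)]
      omega
    · -- a ≤ m - 3, use i = m - 3
      by_cases ha : a ≤ 2
      · refine ⟨m - 3, 2, by omega, by omega, by omega, by omega, ?_⟩
        rw [ff_m3 hm he, ff_two hm]; omega
      · by_cases hpa : a % 2 = 0
        · refine ⟨m - 3, a, by omega, by omega, by omega, by omega, ?_⟩
          rw [ff_m3 hm he, ff_even hm he (i := a) hpa (by omega) (by omega)]; omega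
        · refine ⟨m - 3, a + 1, by omega, by omega, by omega, by omega, ?_⟩
          rw [ff_m3 hm he, ff_even hm he (i := a + 1) (by omega) (by omega) (by omega)]
          omega
  · by_cases hb2 : m - 3 ≤ b
    · -- b ∈ {m-3, m-2}, use i = m - 3
      by_cases ha : a ≤ 2
      · refine ⟨m - 3, 2, by omega, by omega, by omega, by omega, ?_⟩
        rw [ff_m3 hm he, ff_two hm]; omega
      · by_cases hpa : a % 2 = 0
        · refine ⟨m - 3, a, by omega, by omega, by omega, by omega, ?_⟩
          rw [ff_m3 hm he, ff_even hm he (i := a) hpa (by omega) (by omega)]; omega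
        · refine ⟨m - 3, a + 1, by omega, by omega, by omega, by omega, ?_⟩
          rw [ff_m3 hm he, ff_even hm he (i := a + 1) (by omega) (by omega) (by omega)]
          omega
    · -- b ≤ m - 4
      by_cases hsm : b = 1
      · refine ⟨1, 0, by omega, by omega, by omega, by omega, ?_⟩
        rw [ff_zero, ff_odd hm he (i := 1) (by omega) (by omega)]; omega
      · -- b ≥ 2; choose odd i ∈ {b-1, b}
        have hb4 : b ≤ m - 4 := by omega
        have hbig : ∃ i, b - 1 ≤ i ∧ i ≤ b ∧ ff m i = i + 3 := by
          by_cases hpb : b % 2 = 1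
          · exact ⟨b, by omega, by omega, ff_odd hm he hpb (by omega)⟩
          · exact ⟨b - 1, by omega, by omega, ff_odd hm he (by omega) (by omega)⟩
        obtain ⟨i, hi1, hi2, hival⟩ := hbig
        by_cases ha : a ≤ 2
        · refine ⟨i, 2, by omega, by omega, by omega, by omega, ?_⟩
          rw [ff_two hm, hival]; omega
        · by_cases hpa : a % 2 = 0
          · refine ⟨i, a, by omega, by omega, by omega, by omega, ?_⟩
            rw [ff_even hm he (i := a) hpa (by omega) (by omega), hival]; omega
          · refine ⟨i, a + 1, by omega, by omega, by omega, by omega, ?_⟩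
            rw [ff_even hm he (i := a + 1) (by omega) (by omega) (by omega), hival]; omega

lemma main_construct (m : ℕ) (hm : 6 ≤ m) (he : m % 2 = 0) :
    ∃ σ : Equiv.Perm (Fin m), IsInvolution σ ∧ Avoids321 σ ∧ IsSimplePerm σ := by
  set g : Fin m → Fin m := fun i => ⟨ff m i.val, ff_lt hm he i.isLt⟩ with hgdef
  have hg : ∀ i, g (g i) = i := fun i => Fin.ext (ff_inv hm he i.isLt)
  set σ : Equiv.Perm (Fin m) := ⟨g, g, hg, hg⟩ with hσdef
  have hσval : ∀ x : Fin m, (σ x : ℕ) = ff m x.val := fun x => rfl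
  refine ⟨σ, fun i => hg i, ?_, ?_⟩
  · rintro ⟨i, j, k, hij, hjk, h1, h2⟩
    have h1' : ff m k.val < ff m j.val := h1
    have h2' : ff m j.val < ff m i.val := h2
    have d1 := ff_desc hm he (show (i : ℕ) < j from hij) j.isLt h2'
    have d2 := ff_desc hm he (show (j : ℕ) < k from hjk) k.isLt h1'
    omega
  · intro I hI hJ
    by_contra hc
    push_neg at hc
    obtain ⟨h1, h2⟩ := hc
    have hne : I.Nonempty := Finset.card_pos.mp (by omega)
    set a := I.min' hne with ha
    set b := I.max' hne with hb
    have hIeq : I = Finset.Icc a b := by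
      apply Finset.Subset.antisymm
      · intro x hx
        rw [Finset.mem_Icc]
        exact ⟨I.min'_le x hx, I.le_max' x hx⟩
      · intro x hx
        rw [Finset.mem_Icc] at hx
        exact hI a (I.min'_mem hne) b (I.max'_mem hne) x hx.1 hx.2
    have hJne : (I.image ⇑σ).Nonempty := hne.image _
    set c := (I.image ⇑σ).min' hJne with hcdef
    set d := (I.image ⇑σ).max' hJne with hddef
    have hJeq : I.image ⇑σ = Finset.Icc c d := by
      apply Finset.Subset.antisymm
      · intro x hx
        rw [Finset.mem_Icc]
        exact ⟨(I.image ⇑σ).min'_le x hx, (I.image ⇑σ).le_max' x hx⟩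
      · intro x hx
        rw [Finset.mem_Icc] at hx
        exact hJ c ((I.image ⇑σ).min'_mem hJne) d ((I.image ⇑σ).max'_mem hJne) x hx.1 hx.2
    have hcardI : I.card = (b : ℕ) + 1 - a := by rw [hIeq, Fin.card_Icc]
    have hcardJ : I.card = (d : ℕ) + 1 - c := by
      rw [← Finset.card_image_of_injective I σ.injective, hJeq, Fin.card_Icc]
    have hab' : (a : ℕ) ≤ b := I.min'_le b (I.max'_mem hne)
    have hcd' : (c : ℕ) ≤ d := (I.image ⇑σ).min'_le d ((I.image ⇑σ).max'_mem hJne)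
    have hab : (a : ℕ) < b := by omega
    have hno : ¬((a : ℕ) = 0 ∧ (b : ℕ) = m - 1) := by
      rintro ⟨e1, e2⟩
      exact h2 (by omega)
    obtain ⟨i, j, hi1, hi2, hj1, hj2, hkey⟩ := ff_spread hm he hab b.isLt hno
    have hifm : i < m := lt_of_le_of_lt hi2 b.isLt
    have hjfm : j < m := lt_of_le_of_lt hj2 b.isLt
    have hiI : (⟨i, hifm⟩ : Fin m) ∈ I := by
      rw [hIeq, Finset.mem_Icc]
      exact ⟨hi1, hi2⟩
    have hjI : (⟨j, hjfm⟩ : Fin m) ∈ I := by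
      rw [hIeq, Finset.mem_Icc]
      exact ⟨hj1, hj2⟩
    have hiJ := Finset.mem_image_of_mem ⇑σ hiI
    have hjJ := Finset.mem_image_of_mem ⇑σ hjI
    have e1 : (c : ℕ) ≤ ff m j := (I.image ⇑σ).min'_le _ hjJ
    have e2 : ff m i ≤ (d : ℕ) := (I.image ⇑σ).le_max' _ hiJ
    omega

/-- There are simple 321-avoiding involutions of arbitrarily large length;
explicitly, one of length 4n - 6 for every n ≥ 3. -/
theorem infinitely_many_simple_involutions :
    (∀ N : ℕ, ∃ n : ℕ, n > N ∧ ∃ σ : Equiv.Perm (Fin n),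
      IsInvolution σ ∧ Avoids321 σ ∧ IsSimplePerm σ) ∧
    (∀ n : ℕ, 3 ≤ n → ∃ σ : Equiv.Perm (Fin (4 * n - 6)),
      IsInvolution σ ∧ Avoids321 σ ∧ IsSimplePerm σ) := by
  constructor
  · intro N
    exact ⟨4 * (N + 3) - 6, by omega, main_construct _ (by omega) (by omega)⟩
  · intro n hn
    exact main_construct _ (by omega) (by omega)
end

section
/- Let σ be a simple 321-avoiding involution of {1,…,n} with n > 2. Then there is no x with 1 ≤ x < n such that x < σ(x), x+1 < σ(x+1), and σ(x+1) = σ(x) + 1. (In plot language: if two maxima of σ are up-connected, the corresponding minima are not down-connected.) -/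
/-- In a simple 321-avoiding involution of length > 2, the plot has no pair of
symmetric upper and lower connections: there is no x with x < σ x, x+1 < σ (x+1)
and σ (x+1) = σ x + 1. -/
theorem simple_involution_no_symmetric_connections {n : ℕ} (hn : 2 < n)
    (σ : Equiv.Perm (Fin n)) (hinv : IsInvolution σ) (hav : Avoids321 σ)
    (hs : IsSimplePerm σ) :
    ¬ ∃ x : Fin n, ∃ hx : (x : ℕ) + 1 < n,
      x < σ x ∧
      (⟨(x : ℕ) + 1, hx⟩ : Fin n) < σ ⟨(x : ℕ) + 1, hx⟩ ∧
      (σ ⟨(x : ℕ) + 1, hx⟩ : ℕ) = (σ x : ℕ) + 1 := by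
  rintro ⟨x, hx, -, -, hsucc⟩
  set x' : Fin n := ⟨(x : ℕ) + 1, hx⟩ with hx'
  have hne : x ≠ x' := by
    intro h
    have := congrArg Fin.val h
    simp [hx'] at this
  have hmem : ∀ z : Fin n, z ∈ ({x, x'} : Finset (Fin n)) ↔ (z : ℕ) = x ∨ (z : ℕ) = (x : ℕ) + 1 := by
    intro z
    simp only [Finset.mem_insert, Finset.mem_singleton, hx']
    constructor
    · rintro (rfl | rfl) <;> simp
    · rintro (h | h)
      · left; exact Fin.ext h
      · right; exact Fin.ext h
  have hcons : IsConsecutive ({x, x'} : Finset (Fin n)) := by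
    intro a ha b hb z haz hzb
    rw [hmem] at ha hb ⊢
    have haz' : (a : ℕ) ≤ z := haz
    have hzb' : (z : ℕ) ≤ b := hzb
    omega
  have himg : ({x, x'} : Finset (Fin n)).image σ = {σ x, σ x'} := by
    simp [Finset.image_insert, Finset.image_singleton]
  have hne2 : σ x ≠ σ x' := fun h => hne (σ.injective h)
  have hmem2 : ∀ z : Fin n, z ∈ ({σ x, σ x'} : Finset (Fin n)) ↔
      (z : ℕ) = σ x ∨ (z : ℕ) = (σ x : ℕ) + 1 := by
    intro z
    simp only [Finset.mem_insert, Finset.mem_singleton]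
    constructor
    · rintro (rfl | rfl)
      · left; rfl
      · right; exact hsucc
    · rintro (h | h)
      · left; exact Fin.ext h
      · right; exact Fin.ext (h.trans hsucc.symm)
  have hcons2 : IsConsecutive (({x, x'} : Finset (Fin n)).image σ) := by
    rw [himg]
    intro a ha b hb z haz hzb
    rw [hmem2] at ha hb ⊢
    have haz' : (a : ℕ) ≤ z := haz
    have hzb' : (z : ℕ) ≤ b := hzb
    omega
  have hcard : ({x, x'} : Finset (Fin n)).card = 2 := by
    rw [Finset.card_insert_of_notMem (by simpa using hne), Finset.card_singleton]
  rcases hs _ hcons hcons2 with h | h <;> omega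
end

section
/- Let π be a 321-avoiding involution of {1,…,n} such that there is no x with 1 ≤ x < n, x < π(x), x+1 < π(x+1), and π(x+1) = π(x) + 1 (i.e. the plot of π has no pair of symmetric upper and lower connections). Then either π is simple, or there exists k with 1 ≤ k < n such that π({1,…,k}) = {1,…,k} and the induced permutation α₁ of {1,…,k} given by α₁(i) = π(i) is simple. -/
namespace NSC

variable {n : ℕ}

lemma inv_image_set (π : Equiv.Perm (Fin n)) (hinv : IsInvolution π) (S : Set (Fin n))
    (h : ∀ i ∈ S, π i ∈ S) : (π : Fin n → Fin n) '' S = S := by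
  ext x
  constructor
  · rintro ⟨i, hi, rfl⟩; exact h i hi
  · intro hx; exact ⟨π x, h x hx, hinv x⟩

lemma no_fix (π : Equiv.Perm (Fin n)) (hinv : IsInvolution π) (hav : Avoids321 π)
    {p f : Fin n} (h1 : p < f) (h2 : f < π p) (hf : π f = f) : False := by
  exact hav ⟨p, f, π p, h1, h2, by rw [hinv, hf]; exact h1, by rw [hf]; exact h2⟩

lemma no_nest (π : Equiv.Perm (Fin n)) (hinv : IsInvolution π) (hav : Avoids321 π)
    {p x : Fin n} (h1 : p < x) (h2 : x < π x) (h3 : π x < π p) : False := by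
  exact hav ⟨p, x, π x, h1, h2, by rw [hinv]; exact h2, h3⟩

lemma consec_mem {I : Finset (Fin n)} (hI : IsConsecutive I) (hne : I.Nonempty) (z : Fin n) :
    z ∈ I ↔ I.min' hne ≤ z ∧ z ≤ I.max' hne :=
  ⟨fun hz => ⟨I.min'_le z hz, I.le_max' z hz⟩,
   fun h => hI _ (I.min'_mem hne) _ (I.max'_mem hne) z h.1 h.2⟩

lemma consec_card {I : Finset (Fin n)} (hI : IsConsecutive I) (hne : I.Nonempty) :
    I.card = (I.max' hne : ℕ) + 1 - (I.min' hne : ℕ) := by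
  have h : I = Finset.Icc (I.min' hne) (I.max' hne) := by
    ext z; rw [consec_mem hI hne, Finset.mem_Icc]
  have h2 := congrArg Finset.card h
  rwa [Fin.card_Icc] at h2

/-- A proper invariant consecutive interval of size ≥ 2 yields sum-decomposability. -/
lemma invInt (π : Equiv.Perm (Fin n)) (hinv : IsInvolution π) (hav : Avoids321 π)
    (hnd : ¬ SumDecomposable π) (K : Finset (Fin n)) (hK : IsConsecutive K)
    (himg : ∀ i ∈ K, π i ∈ K) (h2 : 2 ≤ K.card) (hn : K.card < n) : False := by
  have hne : K.Nonempty := Finset.card_pos.mp (by omega)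
  have hcard : K.card = (K.max' hne : ℕ) + 1 - (K.min' hne : ℕ) := consec_card hK hne
  have hab : ((K.min' hne : Fin n) : ℕ) ≤ ((K.max' hne : Fin n) : ℕ) :=
    Fin.le_def.mp (K.min'_le _ (K.max'_mem hne))
  rcases Nat.eq_zero_or_pos ((K.min' hne : Fin n) : ℕ) with h0 | h0
  · apply hnd
    refine ⟨(K.max' hne : ℕ) + 1, by omega, by omega, ?_⟩
    have hset : {i : Fin n | (i : ℕ) < (K.max' hne : ℕ) + 1} = (K : Set (Fin n)) := by
      ext z
      simp only [Set.mem_setOf_eq, Finset.mem_coe]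
      rw [consec_mem hK hne z]
      simp only [Fin.le_def]
      omega
    rw [hset]
    exact inv_image_set π hinv _ (fun i hi => himg i hi)
  · have key : ∀ p : Fin n, (p : ℕ) < (K.min' hne : ℕ) → (π p : ℕ) < (K.min' hne : ℕ) := by
      intro p hp
      have hpK : p ∉ K := by
        rw [consec_mem hK hne] ; push_neg; intro h; rw [Fin.le_def] at h; omega
      have hπpK : π p ∉ K := fun h => hpK (by have := himg _ h; rwa [hinv] at this)
      rw [consec_mem hK hne] at hπpK
      push_neg at hπpK
      by_contra hc
      push_neg at hc
      have h1 : K.max' hne < π p := hπpK (Fin.le_def.mpr (by omega))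
      have h1' : (K.max' hne : ℕ) < (π p : ℕ) := Fin.lt_def.mp h1
      have haK : π (K.min' hne) ∈ K := himg _ (K.min'_mem hne)
      have haa : ((K.min' hne : Fin n) : ℕ) ≤ (π (K.min' hne) : ℕ) :=
        Fin.le_def.mp (K.min'_le _ haK)
      have hπab : (π (K.min' hne) : ℕ) ≤ ((K.max' hne : Fin n) : ℕ) :=
        Fin.le_def.mp (K.le_max' _ haK)
      have hpa : p < K.min' hne := Fin.lt_def.mpr hp
      rcases eq_or_lt_of_le haa with he | hl
      · have hfix : π (K.min' hne) = K.min' hne := Fin.ext he.symm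
        exact no_fix π hinv hav hpa (Fin.lt_def.mpr (by omega)) hfix
      · exact no_nest π hinv hav hpa (Fin.lt_def.mpr hl) (Fin.lt_def.mpr (by omega))
    apply hnd
    refine ⟨((K.min' hne : Fin n) : ℕ), by omega, (K.min' hne).isLt, ?_⟩
    exact inv_image_set π hinv _ (fun i hi => key i hi)

/-- Core: two consecutive intervals swapped by π, with distinct minima, are impossible. -/
lemma core (π : Equiv.Perm (Fin n)) (hinv : IsInvolution π) (hav : Avoids321 π)
    (hconn : ¬ ∃ x : Fin n, ∃ hx : (x : ℕ) + 1 < n,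
      x < π x ∧
      (⟨(x : ℕ) + 1, hx⟩ : Fin n) < π ⟨(x : ℕ) + 1, hx⟩ ∧
      (π ⟨(x : ℕ) + 1, hx⟩ : ℕ) = (π x : ℕ) + 1)
    (hnd : ¬ SumDecomposable π)
    (I J : Finset (Fin n)) (hneI : I.Nonempty) (hneJ : J.Nonempty)
    (hI : IsConsecutive I) (hJ : IsConsecutive J)
    (hIJ : ∀ p ∈ I, π p ∈ J) (hJI : ∀ q ∈ J, π q ∈ I)
    (hcard : I.card = J.card) (h2 : 2 ≤ I.card) (hn : I.card < n)
    (hlt : (I.min' hneI : ℕ) < (J.min' hneJ : ℕ)) : False := by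
  have hcardI : I.card = (I.max' hneI : ℕ) + 1 - (I.min' hneI : ℕ) := consec_card hI hneI
  have hcardJ : J.card = (J.max' hneJ : ℕ) + 1 - (J.min' hneJ : ℕ) := consec_card hJ hneJ
  set a := I.min' hneI with ha
  set b := I.max' hneI with hb
  set c := J.min' hneJ with hc
  set d := J.max' hneJ with hd
  have hab : (a : ℕ) ≤ (b : ℕ) := Fin.le_def.mp (I.min'_le b (I.max'_mem hneI))
  have hcd : (c : ℕ) ≤ (d : ℕ) := Fin.le_def.mp (J.min'_le d (J.max'_mem hneJ))
  have hdb : (b : ℕ) < (d : ℕ) := by omega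
  have memI : ∀ z : Fin n, z ∈ I ↔ (a : ℕ) ≤ (z : ℕ) ∧ (z : ℕ) ≤ (b : ℕ) := by
    intro z
    rw [consec_mem hI hneI z]
    simp only [← ha, ← hb, Fin.le_def]
  have memJ : ∀ z : Fin n, z ∈ J ↔ (c : ℕ) ≤ (z : ℕ) ∧ (z : ℕ) ≤ (d : ℕ) := by
    intro z
    rw [consec_mem hJ hneJ z]
    simp only [← hc, ← hd, Fin.le_def]
  rcases le_or_gt (c : ℕ) (b : ℕ) with hcb | hbc
  · -- overlap case
    set K := I ∩ J with hKdef
    have hKmem : ∀ z : Fin n, z ∈ K ↔ (c : ℕ) ≤ (z : ℕ) ∧ (z : ℕ) ≤ (b : ℕ) := by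
      intro z
      rw [hKdef, Finset.mem_inter, memI z, memJ z]
      omega
    have hKimg : ∀ i ∈ K, π i ∈ K := by
      intro i hi
      rw [hKmem] at hi ⊢
      have h1 := (memJ (π i)).mp (hIJ i ((memI i).mpr ⟨by omega, hi.2⟩))
      have h2 := (memI (π i)).mp (hJI i ((memJ i).mpr ⟨hi.1, by omega⟩))
      omega
    have hKcons : IsConsecutive K := by
      intro x hx y hy z h1 h2
      rw [hKmem] at hx hy ⊢
      rw [Fin.le_def] at h1 h2
      omega
    have hcK : c ∈ K := (hKmem c).mpr ⟨le_refl _, hcb⟩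
    have hKIcc : K = Finset.Icc c b := by
      ext z
      rw [hKmem z, Finset.mem_Icc]
      simp only [Fin.le_def]
    have hKcard : K.card = (b : ℕ) + 1 - (c : ℕ) := by rw [hKIcc, Fin.card_Icc]
    rcases le_or_gt 2 K.card with h2K | h1K
    · exact invInt π hinv hav hnd K hKcons hKimg h2K (by omega)
    · have hcb' : (c : ℕ) = (b : ℕ) := by omega
      have hπcK : π c ∈ K := hKimg c hcK
      have hfix : π c = c := by
        have := (hKmem _).mp hπcK
        exact Fin.ext (by omega)
      have hπaJ : π a ∈ J := hIJ a (I.min'_mem hneI)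
      have h1 : a < c := Fin.lt_def.mpr hlt
      have h2' : c < π a := by
        have hge : (c : ℕ) ≤ (π a : ℕ) := ((memJ (π a)).mp hπaJ).1
        rcases eq_or_lt_of_le hge with h | h
        · exfalso
          have hac : π a = π c := by rw [hfix]; exact Fin.ext h.symm
          have : a = c := by have := congrArg π hac; rwa [hinv, hinv] at this
          rw [Fin.ext_iff] at this; omega
        · exact Fin.lt_def.mpr h
      exact no_fix π hinv hav h1 h2' hfix
  · -- disjoint case: all of I strictly before all of J
    have hπaJ : π a ∈ J := hIJ a (I.min'_mem hneI)
    have hπaval := (memJ (π a)).mp hπaJ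
    have hπac : (π a : ℕ) = (c : ℕ) := by
      by_contra hne
      have h1 : (c : ℕ) < (π a : ℕ) := by omega
      have hπcI : π c ∈ I := hJI c (J.min'_mem hneJ)
      have hπcval := (memI (π c)).mp hπcI
      have hane : (a : ℕ) ≠ (π c : ℕ) := by
        intro h
        have h2 : π a = π (π c) := by
          apply congrArg; exact Fin.ext h
        rw [hinv] at h2
        exact hne (by rw [h2])
      have hxx : π c < π (π c) := by
        rw [hinv]; exact Fin.lt_def.mpr (by omega)
      have h3 : π (π c) < π a := by
        rw [hinv]; exact Fin.lt_def.mpr h1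
      exact no_nest π hinv hav (Fin.lt_def.mpr (by omega)) hxx h3
    have ha1n : (a : ℕ) + 1 < n := by have := b.isLt; omega
    set a' : Fin n := (⟨(a : ℕ) + 1, ha1n⟩ : Fin n) with ha'
    have ha'v : (a' : ℕ) = (a : ℕ) + 1 := rfl
    have ha'I : a' ∈ I := (memI a').mpr (by rw [ha'v]; omega)
    have hπa'J : π a' ∈ J := hIJ a' ha'I
    have hπa'val := (memJ (π a')).mp hπa'J
    have hπa'ne : (π a' : ℕ) ≠ (c : ℕ) := by
      intro h
      have heq : a' = a := by
        have h2 : π a' = π a := Fin.ext (by rw [h, hπac])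
        have := congrArg π h2; rwa [hinv, hinv] at this
      have := congrArg Fin.val heq
      rw [ha'v] at this; omega
    have hkey : (π a' : ℕ) = (c : ℕ) + 1 := by
      by_contra hne2
      have hgt : (c : ℕ) + 1 < (π a' : ℕ) := by omega
      have hen : (c : ℕ) + 1 < n := by have := d.isLt; omega
      set e : Fin n := (⟨(c : ℕ) + 1, hen⟩ : Fin n) with he
      have hev : (e : ℕ) = (c : ℕ) + 1 := rfl
      have heJ : e ∈ J := (memJ e).mpr (by rw [hev]; omega)
      have hπeI : π e ∈ I := hJI e heJ
      have hπeval := (memI (π e)).mp hπeI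
      have hne_a : (π e : ℕ) ≠ (a : ℕ) := by
        intro h
        have h2 : π (π e) = π a := by apply congrArg; exact Fin.ext h
        rw [hinv] at h2
        have := congrArg Fin.val h2
        rw [hev, hπac] at this; omega
      have hne_a' : (π e : ℕ) ≠ (a' : ℕ) := by
        intro h
        have h2 : π (π e) = π a' := by apply congrArg; exact Fin.ext h
        rw [hinv] at h2
        have := congrArg Fin.val h2
        rw [hev] at this; omega
      have h1 : a' < π e := Fin.lt_def.mpr (by rw [ha'v]; omega)
      have h2q : π e < π (π e) := by
        rw [hinv]; exact Fin.lt_def.mpr (by rw [hev]; omega)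
      have h3q : π (π e) < π a' := by
        rw [hinv]; exact Fin.lt_def.mpr (by rw [hev]; omega)
      exact no_nest π hinv hav h1 h2q h3q
    apply hconn
    refine ⟨a, ha1n, ?_, ?_, ?_⟩
    · exact Fin.lt_def.mpr (by omega)
    · show a' < π a'
      exact Fin.lt_def.mpr (by rw [ha'v]; omega)
    · show (π a' : ℕ) = (π a : ℕ) + 1
      rw [hkey, hπac]

/-- If not sum-decomposable (under the hypotheses) then simple. -/
lemma lemA (π : Equiv.Perm (Fin n)) (hinv : IsInvolution π) (hav : Avoids321 π)
    (hconn : ¬ ∃ x : Fin n, ∃ hx : (x : ℕ) + 1 < n,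
      x < π x ∧
      (⟨(x : ℕ) + 1, hx⟩ : Fin n) < π ⟨(x : ℕ) + 1, hx⟩ ∧
      (π ⟨(x : ℕ) + 1, hx⟩ : ℕ) = (π x : ℕ) + 1)
    (hnd : ¬ SumDecomposable π) : IsSimplePerm π := by
  intro I hI hJcons
  by_contra hcon
  push_neg at hcon
  obtain ⟨hc1, hc2⟩ := hcon
  have h2 : 2 ≤ I.card := by omega
  have hlen : I.card ≤ n := by simpa using I.card_le_univ
  have hn : I.card < n := lt_of_le_of_ne hlen hc2
  set J := I.image π with hJdef
  have hneI : I.Nonempty := Finset.card_pos.mp (by omega)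
  have hneJ : J.Nonempty := hneI.image π
  have hIJ : ∀ p ∈ I, π p ∈ J := fun p hp => Finset.mem_image_of_mem π hp
  have hJI : ∀ q ∈ J, π q ∈ I := by
    intro q hq
    rw [hJdef, Finset.mem_image] at hq
    obtain ⟨p, hp, rfl⟩ := hq
    rwa [hinv]
  have hcard : I.card = J.card := (Finset.card_image_of_injective I π.injective).symm
  rcases lt_trichotomy ((I.min' hneI : Fin n) : ℕ) ((J.min' hneJ : Fin n) : ℕ) with h | h | h
  · exact core π hinv hav hconn hnd I J hneI hneJ hI hJcons hIJ hJI hcard h2 hn h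
  · have hcI := consec_card hI hneI
    have hcJ := consec_card hJcons hneJ
    have habI : ((I.min' hneI : Fin n) : ℕ) ≤ ((I.max' hneI : Fin n) : ℕ) :=
      Fin.le_def.mp (I.min'_le _ (I.max'_mem hneI))
    have habJ : ((J.min' hneJ : Fin n) : ℕ) ≤ ((J.max' hneJ : Fin n) : ℕ) :=
      Fin.le_def.mp (J.min'_le _ (J.max'_mem hneJ))
    have hIJ' : I = J := by
      ext z
      rw [consec_mem hI hneI, consec_mem hJcons hneJ]
      simp only [Fin.le_def]
      omega
    have himg : ∀ i ∈ I, π i ∈ I := by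
      intro i hi; rw [hIJ']; exact hIJ _ hi
    exact invInt π hinv hav hnd I hI himg h2 hn
  · exact core π hinv hav hconn hnd J I hneJ hneI hJcons hI hJI hIJ hcard.symm
      (by omega) (by omega) h

end NSC

/-- A 321-avoiding involution whose plot has no pair of symmetric connections is
either simple, or sum-decomposable with simple first block. -/
theorem no_symmetric_connections_simple_or_type12 {n : ℕ}
    (π : Equiv.Perm (Fin n)) (hinv : IsInvolution π) (hav : Avoids321 π)
    (hconn : ¬ ∃ x : Fin n, ∃ hx : (x : ℕ) + 1 < n,
      x < π x ∧
      (⟨(x : ℕ) + 1, hx⟩ : Fin n) < π ⟨(x : ℕ) + 1, hx⟩ ∧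
      (π ⟨(x : ℕ) + 1, hx⟩ : ℕ) = (π x : ℕ) + 1) :
    IsSimplePerm π ∨
    ∃ k : ℕ, ∃ hk : 1 ≤ k ∧ k < n,
      (π : Fin n → Fin n) '' {i : Fin n | (i : ℕ) < k} = {i : Fin n | (i : ℕ) < k} ∧
      ∃ α₁ : Equiv.Perm (Fin k),
        (∀ i : Fin k, (α₁ i : ℕ) = (π ⟨i, by have := i.isLt; omega⟩ : ℕ)) ∧
        IsSimplePerm α₁ := by
  classical
  by_cases hs : IsSimplePerm π
  · exact Or.inl hs
  right
  have hsd : SumDecomposable π := by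
    by_contra h
    exact hs (NSC.lemA π hinv hav hconn h)
  set P : ℕ → Prop := fun k => 1 ≤ k ∧ k < n ∧
    (π : Fin n → Fin n) '' {i : Fin n | (i : ℕ) < k} = {i : Fin n | (i : ℕ) < k} with hP
  have hex : ∃ k, P k := hsd
  set k0 := Nat.find hex with hk0
  obtain ⟨hk1, hk2, heq⟩ := Nat.find_spec hex
  have hmem : ∀ i : Fin n, (i : ℕ) < k0 → (π i : ℕ) < k0 := by
    intro i hi
    have : π i ∈ (π : Fin n → Fin n) '' {i : Fin n | (i : ℕ) < k0} := ⟨i, hi, rfl⟩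
    rw [heq] at this
    exact this
  set f : Fin k0 → Fin k0 := fun i =>
    ⟨(π ⟨(i : ℕ), lt_trans i.isLt hk2⟩ : ℕ), hmem _ i.isLt⟩ with hf
  have hff : ∀ i, f (f i) = i := by
    intro i
    apply Fin.ext
    show (π ⟨(π ⟨(i : ℕ), _⟩ : ℕ), _⟩ : ℕ) = (i : ℕ)
    have h1 : (⟨((π ⟨(i : ℕ), lt_trans i.isLt hk2⟩ : Fin n) : ℕ),
        lt_trans (hmem _ i.isLt) hk2⟩ : Fin n) = π ⟨(i : ℕ), lt_trans i.isLt hk2⟩ :=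
      Fin.ext rfl
    rw [h1, hinv]
  set α₁ : Equiv.Perm (Fin k0) := ⟨f, f, hff, hff⟩ with hα
  have hαval : ∀ i : Fin k0, (α₁ i : ℕ) = (π ⟨(i : ℕ), lt_trans i.isLt hk2⟩ : ℕ) :=
    fun i => rfl
  have hinv₁ : IsInvolution α₁ := hff
  have hav₁ : Avoids321 α₁ := by
    rintro ⟨i, j, k, hij, hjk, h1, h2⟩
    apply hav
    refine ⟨⟨(i : ℕ), lt_trans i.isLt hk2⟩, ⟨(j : ℕ), lt_trans j.isLt hk2⟩,
      ⟨(k : ℕ), lt_trans k.isLt hk2⟩, ?_, ?_, ?_, ?_⟩ <;>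
      rw [Fin.lt_def] at * <;>
      simp only [← hαval] at * <;> exact (by assumption)
  have hconn₁ : ¬ ∃ x : Fin k0, ∃ hx : (x : ℕ) + 1 < k0,
      x < α₁ x ∧
      (⟨(x : ℕ) + 1, hx⟩ : Fin k0) < α₁ ⟨(x : ℕ) + 1, hx⟩ ∧
      (α₁ ⟨(x : ℕ) + 1, hx⟩ : ℕ) = (α₁ x : ℕ) + 1 := by
    rintro ⟨x, hx, h1, h2, h3⟩
    apply hconn
    have hxn : (x : ℕ) + 1 < n := by omega
    refine ⟨⟨(x : ℕ), lt_trans x.isLt hk2⟩, hxn, ?_, ?_, ?_⟩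
    · rw [Fin.lt_def] at h1 ⊢
      rw [hαval] at h1
      exact h1
    · rw [Fin.lt_def] at h2 ⊢
      rw [hαval] at h2
      exact h2
    · rw [hαval, hαval] at h3
      exact h3
  have hnd₁ : ¬ SumDecomposable α₁ := by
    rintro ⟨k', h1', h2', heq'⟩
    have hmem' : ∀ i : Fin k0, (i : ℕ) < k' → (α₁ i : ℕ) < k' := by
      intro i hi
      have : α₁ i ∈ (α₁ : Fin k0 → Fin k0) '' {i : Fin k0 | (i : ℕ) < k'} := ⟨i, hi, rfl⟩
      rw [heq'] at this
      exact this
    have hPk' : P k' := by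
      refine ⟨h1', by omega, ?_⟩
      apply NSC.inv_image_set π hinv
      intro i hi
      simp only [Set.mem_setOf_eq] at hi ⊢
      have hik0 : (i : ℕ) < k0 := by omega
      have h3 := hmem' ⟨(i : ℕ), hik0⟩ hi
      rw [hαval] at h3
      have he : (⟨((⟨(i : ℕ), hik0⟩ : Fin k0) : ℕ), lt_trans hik0 hk2⟩ : Fin n) = i :=
        Fin.ext rfl
      rwa [he] at h3
    exact Nat.find_min hex h2' hPk'
  have hsimple : IsSimplePerm α₁ := NSC.lemA α₁ hinv₁ hav₁ hconn₁ hnd₁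
  exact ⟨k0, ⟨hk1, hk2⟩, heq, α₁, fun i => rfl, hsimple⟩
end

section
/- Let σ be a simple 321-avoiding involution of {1,…,n} with n > 2, let m_1 < m_2 < ⋯ < m_h be the points x with x < σ(x), let M_i = σ(m_i), and for each i let s_i be the number of indices j with m_i ≤ j < M_i such that exactly one of the two conditions j < σ(j) and j+1 < σ(j+1) holds (the number of crossings of the diagonal between the maximum M_i and the minimum m_i). Then: (i) every s_i is odd; (ii) s_1 = s_h = 1; (iii) if s_i = 1 then s_{i−1} ≠ 1 (when i > 1) and s_{i+1} ≠ 1 (when i < h); (iv) |s_{i+1} − s_i| ≤ 2 for all 1 ≤ i < h. -/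
def cntB (g : ℕ → Bool) (a b : ℕ) : ℕ :=
  ((Finset.Ico a b).filter fun j => g j ≠ g (j + 1)).card

lemma cntB_add (g : ℕ → Bool) {a b c : ℕ} (hab : a ≤ b) (hbc : b ≤ c) :
    cntB g a c = cntB g a b + cntB g b c := by
  unfold cntB
  rw [← Finset.Ico_union_Ico_eq_Ico hab hbc, Finset.filter_union,
    Finset.card_union_of_disjoint
      (Finset.disjoint_filter_filter (Finset.Ico_disjoint_Ico_consecutive a b c))]

lemma cntB_even (g : ℕ → Bool) {a b : ℕ} (hab : a ≤ b) :
    (g a = g b) ↔ Even (cntB g a b) := by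
  induction b, hab using Nat.le_induction with
  | base => simp [cntB]
  | succ b hb ih =>
    have hsplit : cntB g a (b + 1) = cntB g a b + cntB g b (b + 1) :=
      cntB_add g hb (Nat.le_succ b)
    have h1 : cntB g b (b + 1) = if g b = g (b + 1) then 0 else 1 := by
      unfold cntB
      rw [Nat.Ico_succ_singleton]
      by_cases hgb : g b = g (b + 1)
      · rw [if_pos hgb, Finset.filter_singleton, if_neg (by simp [hgb]), Finset.card_empty]
      · rw [if_neg hgb, Finset.filter_singleton, if_pos (by simp [hgb]), Finset.card_singleton]
    rw [hsplit, h1]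
    by_cases hgb : g b = g (b + 1)
    · simp only [hgb, if_true, Nat.add_zero]
      rw [← ih, hgb]
    · simp only [hgb, if_false]
      rw [Nat.even_add_one, ← ih]
      cases hA : g a <;> cases hB : g b <;> cases hC : g (b + 1) <;> simp_all

lemma cntB_zero (g : ℕ → Bool) {a b x : ℕ} (hz : cntB g a b = 0) (hax : a ≤ x)
    (hxb : x ≤ b) : g x = g a := by
  have h := cntB_add g hax hxb
  have h2 : cntB g a x = 0 := by omega
  have h3 := (cntB_even g hax).2 (by rw [h2]; exact Even.zero)
  exact h3.symm

lemma cntB_le_two (g : ℕ → Bool) {a b : ℕ} (v : Bool)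
    (hv : ∀ x, a < x → x < b → g x = v) : cntB g a b ≤ 2 := by
  have hsub : ((Finset.Ico a b).filter fun j => g j ≠ g (j + 1)) ⊆ {a, b - 1} := by
    intro j hj
    simp only [Finset.mem_filter, Finset.mem_Ico] at hj
    simp only [Finset.mem_insert, Finset.mem_singleton]
    by_contra hcon
    push_neg at hcon
    have h1 : a < j := lt_of_le_of_ne hj.1.1 (Ne.symm hcon.1)
    have h2 : j + 1 < b := by omega
    have e1 := hv j h1 (by omega)
    have e2 := hv (j + 1) (by omega) h2
    exact hj.2 (e1.trans e2.symm)
  calc ((Finset.Ico a b).filter fun j => g j ≠ g (j + 1)).card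
      ≤ ({a, b - 1} : Finset ℕ).card := Finset.card_le_card hsub
    _ ≤ 2 := (Finset.card_insert_le a {b - 1}).trans (by simp)

/-- Auxiliary: indicator of excedance positions, as a function on `ℕ`. -/
def gOp {n : ℕ} (σ : Equiv.Perm (Fin n)) : ℕ → Bool :=
  fun x => if hx : x < n then decide (x < (σ ⟨x, hx⟩ : ℕ)) else false

/-- The sequence of diagonal-crossing numbers of a simple 321-avoiding involution:
each s i is odd, the first and last are 1, no two consecutive entries are both 1,
and consecutive entries differ by at most 2. -/
theorem crossing_sequence_properties {n : ℕ} (hn : 2 < n)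
    (σ : Equiv.Perm (Fin n)) (hinv : IsInvolution σ) (hav : Avoids321 σ)
    (hs : IsSimplePerm σ)
    (h : ℕ) (m : Fin h → Fin n) (hmono : StrictMono m)
    (hrange : ∀ x : Fin n, x < σ x ↔ ∃ i : Fin h, m i = x)
    (s : Fin h → ℕ)
    (hsdef : ∀ i : Fin h, s i = Nat.card {j : Fin n //
      m i ≤ j ∧ j < σ (m i) ∧
      Xor' ((j : ℕ) < (σ j : ℕ))
        (∀ hj : (j : ℕ) + 1 < n,
          (j : ℕ) + 1 < (σ ⟨(j : ℕ) + 1, hj⟩ : ℕ))}) :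
    (∀ i : Fin h, Odd (s i)) ∧
    (∀ i : Fin h, ((i : ℕ) = 0 → s i = 1) ∧ ((i : ℕ) = h - 1 → s i = 1)) ∧
    (∀ i : Fin h, s i = 1 →
      (∀ j : Fin h, (j : ℕ) + 1 = (i : ℕ) → s j ≠ 1) ∧
      (∀ j : Fin h, (i : ℕ) + 1 = (j : ℕ) → s j ≠ 1)) ∧
    (∀ i j : Fin h, (i : ℕ) + 1 = (j : ℕ) → |(s j : ℤ) - (s i : ℤ)| ≤ 2) := by
  classical
  have no321 : ∀ i j k : Fin n, i < j → j < k → σ k < σ j → σ j < σ i → False :=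
    fun i j k h1 h2 h3 h4 => hav ⟨i, j, k, h1, h2, h3, h4⟩
  -- simplicity gateway 1 : invariant consecutive sets
  have key : ∀ I : Finset (Fin n), IsConsecutive I → (∀ x ∈ I, σ x ∈ I) →
      2 ≤ I.card → I.card < n → False := by
    intro I hc hsubI h2 hltn
    have himg : I.image σ = I := by
      apply Finset.eq_of_subset_of_card_le
      · intro y hy
        obtain ⟨x, hx, rfl⟩ := Finset.mem_image.1 hy
        exact hsubI x hx
      · rw [Finset.card_image_of_injective I σ.injective]
    rcases hs I hc (by rw [himg]; exact hc) with h' | h' <;> omega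
  have pair_consec : ∀ x y : Fin n, (y : ℕ) = (x : ℕ) + 1 →
      IsConsecutive ({x, y} : Finset (Fin n)) := by
    intro x y hxy p hp q hq z hpz hzq
    simp only [Finset.mem_insert, Finset.mem_singleton] at hp hq ⊢
    rw [Fin.le_def] at hpz hzq
    have hz : (z : ℕ) = (x : ℕ) ∨ (z : ℕ) = (y : ℕ) := by
      rcases hp with rfl | rfl <;> rcases hq with rfl | rfl <;> omega
    rcases hz with hz | hz
    · exact Or.inl (Fin.ext hz)
    · exact Or.inr (Fin.ext hz)
  -- simplicity gateway 2 : adjacent pair mapping to adjacent pair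
  have key2 : ∀ x y : Fin n, (y : ℕ) = (x : ℕ) + 1 →
      ((σ y : ℕ)) = (σ x : ℕ) + 1 → False := by
    intro x y hxy hsxy
    have hxyne : x ≠ y := fun e => by rw [e] at hxy; omega
    have himg : ({x, y} : Finset (Fin n)).image σ = {σ x, σ y} := by
      rw [Finset.image_insert, Finset.image_singleton]
    rcases hs {x, y} (pair_consec x y hxy)
        (by rw [himg]; exact pair_consec (σ x) (σ y) hsxy) with h' | h' <;>
    · rw [Finset.card_insert_of_notMem (by simp [hxyne]), Finset.card_singleton] at h'
      omega
  -- no fixed points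
  have nofix : ∀ x : Fin n, σ x ≠ x := by
    intro x hfix
    by_cases hx0 : (x : ℕ) = 0
    · -- invariant final segment Ioi x
      refine key (Finset.Ioi x) ?_ ?_ ?_ ?_
      · intro p hp q hq z hpz hzq
        rw [Finset.mem_Ioi] at hp ⊢
        exact lt_of_lt_of_le hp hpz
      · intro y hy
        rw [Finset.mem_Ioi] at hy ⊢
        rcases lt_or_eq_of_le (Fin.le_def.2 (by omega : (x : ℕ) ≤ (σ y : ℕ))) with hlt | heq
        · exact hlt
        · exact absurd (σ.injective (heq.symm.trans hfix.symm).symm)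
            (by intro e; rw [e] at hy; exact lt_irrefl y hy)
      · rw [Fin.card_Ioi]; omega
      · rw [Fin.card_Ioi]; omega
    by_cases hxn : (x : ℕ) = n - 1
    · -- invariant initial segment Iio x
      refine key (Finset.Iio x) ?_ ?_ ?_ ?_
      · intro p hp q hq z hpz hzq
        rw [Finset.mem_Iio] at hq ⊢
        exact lt_of_le_of_lt hzq hq
      · intro y hy
        rw [Finset.mem_Iio] at hy ⊢
        have h1 : (σ y : ℕ) < n := (σ y).isLt
        have h2 : σ y ≠ x := by
          intro e
          exact absurd (σ.injective (e.trans hfix.symm))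
            (by intro e2; rw [e2] at hy; exact lt_irrefl x hy)
        rw [Fin.lt_def]
        have h3 : (σ y : ℕ) ≠ (x : ℕ) := fun e => h2 (Fin.ext e)
        omega
      · rw [Fin.card_Iio]; omega
      · rw [Fin.card_Iio]; omega
    · -- interior fixed point : Iic x invariant
      refine key (Finset.Iic x) ?_ ?_ ?_ ?_
      · intro p hp q hq z hpz hzq
        rw [Finset.mem_Iic] at hq ⊢
        exact le_trans hzq hq
      · intro y hy
        rw [Finset.mem_Iic] at hy ⊢
        by_contra hcon
        rw [not_le] at hcon
        have hyx : y < x := by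
          rcases lt_or_eq_of_le hy with hlt | rfl
          · exact hlt
          · rw [hfix] at hcon; exact absurd hcon (lt_irrefl y)
        exact no321 y x (σ y) hyx hcon
          (by rw [Fin.lt_def, hinv y, hfix]; exact Fin.lt_def.1 hyx)
          (by rw [Fin.lt_def, hfix]; exact Fin.lt_def.1 hcon)
      · rw [Fin.card_Iic]; omega
      · rw [Fin.card_Iic]; omega
  -- trichotomy
  have op_or_cl : ∀ x : Fin n, ((x : ℕ) < (σ x : ℕ)) ∨ ((σ x : ℕ) < (x : ℕ)) := by
    intro x
    rcases lt_trichotomy ((x : ℕ)) ((σ x : ℕ)) with hlt | heq | hgt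
    · exact Or.inl hlt
    · exact absurd (Fin.ext heq.symm) (nofix x)
    · exact Or.inr hgt
  have op_mk : ∀ i : Fin h, (m i : ℕ) < (σ (m i) : ℕ) :=
    fun i => Fin.lt_def.1 ((hrange (m i)).2 ⟨i, rfl⟩)
  have op_ex : ∀ x : Fin n, (x : ℕ) < (σ x : ℕ) → ∃ k : Fin h, m k = x :=
    fun x hx => (hrange x).1 (Fin.lt_def.2 hx)
  have cl_ex : ∀ x : Fin n, (σ x : ℕ) < (x : ℕ) → ∃ k : Fin h, σ (m k) = x := by
    intro x hx
    have hop : (σ x : ℕ) < (σ (σ x) : ℕ) := by rw [hinv x]; exact hx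
    obtain ⟨k, hk⟩ := op_ex (σ x) hop
    exact ⟨k, by rw [hk, hinv x]⟩
  have Mmono : ∀ i j : Fin h, i < j → (σ (m i) : ℕ) < (σ (m j) : ℕ) := by
    intro i j hij
    have hmij : (m i : ℕ) < (m j : ℕ) := Fin.lt_def.1 (hmono hij)
    rcases lt_trichotomy ((σ (m j) : ℕ)) ((σ (m i) : ℕ)) with hlt | heq | hgt
    · exact absurd (no321 (m j) (σ (m j)) (σ (m i)) (Fin.lt_def.2 (op_mk j))
        (Fin.lt_def.2 hlt)
        (by rw [Fin.lt_def, hinv (m i), hinv (m j)]; exact hmij)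
        (by rw [Fin.lt_def, hinv (m j)]; exact op_mk j)) (fun f => f)
    · exact absurd (hmono.injective (σ.injective (Fin.ext heq))) (by
        intro e; rw [e] at hij; exact lt_irrefl i hij)
    · exact hgt
  have Mmono' : ∀ i j : Fin h, i ≤ j → (σ (m i) : ℕ) ≤ (σ (m j) : ℕ) := by
    intro i j hij
    rcases eq_or_lt_of_le hij with rfl | hlt
    · exact le_refl _
    · exact le_of_lt (Mmono i j hlt)
  -- g facts
  have gtrue : ∀ x : Fin n, gOp σ (x : ℕ) = true ↔ (x : ℕ) < (σ x : ℕ) := by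
    intro x
    unfold gOp
    rw [dif_pos x.isLt]
    simp [Fin.eta]
  have gfalse : ∀ x : Fin n, gOp σ (x : ℕ) = false ↔ (σ x : ℕ) < (x : ℕ) := by
    intro x
    constructor
    · intro hf
      rcases op_or_cl x with hop | hcl
      · rw [(gtrue x).2 hop] at hf; exact absurd hf (by simp)
      · exact hcl
    · intro hcl
      cases hgx : gOp σ (x : ℕ)
      · rfl
      · have := (gtrue x).1 hgx; omega
  -- s i = cntB
  have hsC : ∀ i : Fin h, s i = cntB (gOp σ) ((m i : ℕ)) ((σ (m i) : ℕ)) := by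
    intro i
    rw [hsdef i, Nat.card_eq_fintype_card, Fintype.card_subtype]
    unfold cntB
    apply Finset.card_bij (fun (a : Fin n) _ => (a : ℕ))
    · intro a ha
      simp only [Finset.mem_filter, Finset.mem_univ, true_and] at ha
      obtain ⟨h1, h2, h3⟩ := ha
      have h2' : (a : ℕ) < (σ (m i) : ℕ) := Fin.lt_def.1 h2
      have ha1 : (a : ℕ) + 1 < n := lt_of_le_of_lt h2' (σ (m i)).isLt
      simp only [Finset.mem_filter, Finset.mem_Ico]
      refine ⟨⟨Fin.le_def.1 h1, h2'⟩, ?_⟩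
      have hga : gOp σ (a : ℕ) = decide ((a : ℕ) < (σ a : ℕ)) := by
        unfold gOp; rw [dif_pos a.isLt]
      have hga1 : gOp σ ((a : ℕ) + 1) =
          decide ((a : ℕ) + 1 < (σ ⟨(a : ℕ) + 1, ha1⟩ : ℕ)) := by
        unfold gOp; rw [dif_pos ha1]
      rw [hga, hga1]
      rcases h3 with ⟨hA, hB⟩ | ⟨hB, hA⟩
      · have hB' : ¬ ((a : ℕ) + 1 < (σ ⟨(a : ℕ) + 1, ha1⟩ : ℕ)) := fun hb => hB fun _ => hb
        simp [hA, hB']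
      · have hB' : (a : ℕ) + 1 < (σ ⟨(a : ℕ) + 1, ha1⟩ : ℕ) := hB ha1
        simp [hA, hB']
    · intro a ha b hb hab
      exact Fin.ext hab
    · intro b hb
      simp only [Finset.mem_filter, Finset.mem_Ico] at hb
      obtain ⟨⟨h1, h2⟩, h3⟩ := hb
      have hbn : b < n := lt_trans h2 (σ (m i)).isLt
      have hb1 : b + 1 < n := lt_of_le_of_lt h2 (σ (m i)).isLt
      refine ⟨⟨b, hbn⟩, ?_, rfl⟩
      simp only [Finset.mem_filter, Finset.mem_univ, true_and]
      refine ⟨Fin.le_def.2 h1, Fin.lt_def.2 h2, ?_⟩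
      have hga : gOp σ b = decide (b < (σ ⟨b, hbn⟩ : ℕ)) := by
        unfold gOp; rw [dif_pos hbn]
      have hga1 : gOp σ (b + 1) = decide (b + 1 < (σ ⟨b + 1, hb1⟩ : ℕ)) := by
        unfold gOp; rw [dif_pos hb1]
      rw [hga, hga1] at h3
      by_cases hA : (b : ℕ) < (σ ⟨b, hbn⟩ : ℕ) <;>
        by_cases hB : b + 1 < (σ ⟨b + 1, hb1⟩ : ℕ)
      · simp [hA, hB] at h3
      · exact Or.inl ⟨hA, fun hb' => hB (hb' hb1)⟩
      · exact Or.inr ⟨fun _ => hB, hA⟩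
      · simp [hA, hB] at h3
  have gM : ∀ i : Fin h, gOp σ ((m i : ℕ)) = true := fun i => (gtrue (m i)).2 (op_mk i)
  have gMfalse : ∀ i : Fin h, gOp σ ((σ (m i) : ℕ)) = false := fun i =>
    (gfalse (σ (m i))).2 (by rw [hinv (m i)]; exact op_mk i)
  -- Part (i) : each s i is odd
  have part1 : ∀ i : Fin h, Odd (s i) := by
    intro i
    rw [hsC i, ← Nat.not_even_iff_odd]
    intro hev
    have heq := (cntB_even (gOp σ) (le_of_lt (op_mk i))).2 hev
    rw [gM i, gMfalse i] at heq
    exact absurd heq (by simp)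
  -- Part (ii) first : s 0 = 1
  have part2a : ∀ i : Fin h, (i : ℕ) = 0 → s i = 1 := by
    intro i hi0
    have hv : ∀ x, (m i : ℕ) < x → x < (σ (m i) : ℕ) → gOp σ x = true := by
      intro x hx1 hx2
      have hxn : x < n := lt_trans hx2 (σ (m i)).isLt
      rcases op_or_cl ⟨x, hxn⟩ with hop | hcl
      · exact (gtrue ⟨x, hxn⟩).2 hop
      · exfalso
        obtain ⟨k, hk⟩ := cl_ex ⟨x, hxn⟩ hcl
        have hk1 : (σ (m k) : ℕ) = x := by rw [hk]
        have hle : i ≤ k := Fin.le_def.2 (by omega)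
        have := Mmono' i k hle
        omega
    have hle2 := cntB_le_two (gOp σ) true hv
    obtain ⟨t, ht⟩ := part1 i
    have := hsC i
    omega
  -- Part (ii) second : s (h-1) = 1
  have part2b : ∀ i : Fin h, (i : ℕ) = h - 1 → s i = 1 := by
    intro i hih
    have hv : ∀ x, (m i : ℕ) < x → x < (σ (m i) : ℕ) → gOp σ x = false := by
      intro x hx1 hx2
      have hxn : x < n := lt_trans hx2 (σ (m i)).isLt
      rcases op_or_cl ⟨x, hxn⟩ with hop | hcl
      · exfalso
        obtain ⟨k, hk⟩ := op_ex ⟨x, hxn⟩ hop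
        have hk1 : (m k : ℕ) = x := by rw [hk]
        have hle : k ≤ i := Fin.le_def.2 (by have := k.isLt; omega)
        have := Fin.le_def.1 (hmono.monotone hle)
        omega
      · exact (gfalse ⟨x, hxn⟩).2 hcl
    have hle2 := cntB_le_two (gOp σ) false hv
    obtain ⟨t, ht⟩ := part1 i
    have := hsC i
    omega
  -- Part (iii) core : consecutive indices cannot both have s = 1
  have main3 : ∀ i j : Fin h, (i : ℕ) + 1 = (j : ℕ) → s i = 1 → s j = 1 → False := by
    intro i j hij hsi hsj
    have hij' : i < j := Fin.lt_def.2 (by omega)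
    have hmij : (m i : ℕ) < (m j : ℕ) := Fin.lt_def.1 (hmono hij')
    have hMij : (σ (m i) : ℕ) < (σ (m j) : ℕ) := Mmono i j hij'
    by_cases hadj : (m j : ℕ) = (m i : ℕ) + 1
    · -- adjacent openers force adjacent closers, contradicting simplicity
      have hne : (m j : ℕ) ≠ (σ (m i) : ℕ) := by
        intro e
        have he : m j = σ (m i) := Fin.ext e
        have h1 := op_mk j
        rw [he] at h1
        rw [hinv (m i)] at h1
        have := op_mk i
        omega
      have hmjMi : (m j : ℕ) < (σ (m i) : ℕ) := by have := op_mk i; omega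
      have hsplit : cntB (gOp σ) ((m j : ℕ)) ((σ (m j) : ℕ)) =
          cntB (gOp σ) ((m j : ℕ)) ((σ (m i) : ℕ)) +
          cntB (gOp σ) ((σ (m i) : ℕ)) ((σ (m j) : ℕ)) :=
        cntB_add _ (le_of_lt hmjMi) (le_of_lt hMij)
      have hodd1 : ¬ Even (cntB (gOp σ) ((m j : ℕ)) ((σ (m i) : ℕ))) := by
        intro hev
        have heq := (cntB_even (gOp σ) (le_of_lt hmjMi)).2 hev
        rw [gM j, gMfalse i] at heq
        exact absurd heq (by simp)
      have h1 : 1 ≤ cntB (gOp σ) ((m j : ℕ)) ((σ (m i) : ℕ)) :=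
        Nat.pos_of_ne_zero (fun e => hodd1 (by rw [e]; exact Even.zero))
      have hz : cntB (gOp σ) ((σ (m i) : ℕ)) ((σ (m j) : ℕ)) = 0 := by
        rw [hsC j] at hsj; omega
      have hMadj : (σ (m j) : ℕ) = (σ (m i) : ℕ) + 1 := by
        by_contra hcon
        have hlt : (σ (m i) : ℕ) + 1 < (σ (m j) : ℕ) := by omega
        have hxn : (σ (m i) : ℕ) + 1 < n := lt_trans hlt (σ (m j)).isLt
        have hgx := cntB_zero (gOp σ) hz (Nat.le_succ _) (le_of_lt hlt)
        rw [gMfalse i] at hgx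
        have hcl : (σ (⟨(σ (m i) : ℕ) + 1, hxn⟩ : Fin n) : ℕ) <
            ((⟨(σ (m i) : ℕ) + 1, hxn⟩ : Fin n) : ℕ) := (gfalse _).1 hgx
        obtain ⟨k, hk⟩ := cl_ex _ hcl
        have hk1 : (σ (m k) : ℕ) = (σ (m i) : ℕ) + 1 := by rw [hk]
        have hik : i < k := lt_of_not_ge fun hle => by have := Mmono' k i hle; omega
        have hkj : k < j := lt_of_not_ge fun hle => by have := Mmono' j k hle; omega
        rw [Fin.lt_def] at hik hkj
        omega
      exact key2 (m i) (m j) hadj hMadj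
    · -- non-adjacent openers : [0, M i] is invariant, contradicting simplicity
      have hx1n : (m i : ℕ) + 1 < n :=
        lt_of_le_of_lt (by have := op_mk i; omega) (σ (m i)).isLt
      have hgx1 : gOp σ ((m i : ℕ) + 1) = false := by
        rcases op_or_cl ⟨(m i : ℕ) + 1, hx1n⟩ with hop | hcl
        · exfalso
          obtain ⟨k, hk⟩ := op_ex _ hop
          have hmk : (m k : ℕ) = (m i : ℕ) + 1 := by rw [hk]
          have hik : i < k := lt_of_not_ge fun hle => by
            have := Fin.le_def.1 (hmono.monotone hle); omega
          have hjk : j ≤ k := Fin.le_def.2 (by rw [Fin.lt_def] at hik; omega)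
          have := Fin.le_def.1 (hmono.monotone hjk)
          omega
        · exact (gfalse _).2 hcl
      have hcond : gOp σ ((m i : ℕ)) ≠ gOp σ ((m i : ℕ) + 1) := by
        rw [gM i, hgx1]; simp
      have hone : cntB (gOp σ) ((m i : ℕ)) ((m i : ℕ) + 1) = 1 := by
        unfold cntB
        rw [Nat.Ico_succ_singleton, Finset.filter_singleton, if_pos hcond,
          Finset.card_singleton]
      have hsplit : cntB (gOp σ) ((m i : ℕ)) ((σ (m i) : ℕ)) =
          cntB (gOp σ) ((m i : ℕ)) ((m i : ℕ) + 1) +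
          cntB (gOp σ) ((m i : ℕ) + 1) ((σ (m i) : ℕ)) :=
        cntB_add _ (Nat.le_succ _) (by have := op_mk i; omega)
      have hz : cntB (gOp σ) ((m i : ℕ) + 1) ((σ (m i) : ℕ)) = 0 := by
        rw [hsC i] at hsi; omega
      refine key (Finset.Iic (σ (m i))) ?_ ?_ ?_ ?_
      · intro p hp q hq z hpz hzq
        rw [Finset.mem_Iic] at hq ⊢
        exact le_trans hzq hq
      · intro y hy
        rw [Finset.mem_Iic] at hy ⊢
        rcases op_or_cl y with hop | hcl
        · obtain ⟨k, hk⟩ := op_ex y hop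
          have hki : k ≤ i := by
            by_contra hcon
            have hik : i < k := lt_of_not_ge hcon
            have hmk1 : (m i : ℕ) < (m k : ℕ) := Fin.lt_def.1 (hmono hik)
            have hmk2 : (m k : ℕ) ≤ (σ (m i) : ℕ) := by
              rw [hk]; exact Fin.le_def.1 hy
            have hgz := cntB_zero (gOp σ) hz
              (by omega : (m i : ℕ) + 1 ≤ (m k : ℕ)) hmk2
            rw [hgx1] at hgz
            have ht := (gtrue (m k)).2 (op_mk k)
            rw [ht] at hgz
            exact absurd hgz (by simp)
          rw [← hk]
          exact Fin.le_def.2 (Mmono' k i hki)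
        · exact Fin.le_def.2 (le_trans (le_of_lt hcl) (Fin.le_def.1 hy))
      · rw [Fin.card_Iic]
        have := op_mk i
        omega
      · rw [Fin.card_Iic]
        have := (σ (m j)).isLt
        omega
  -- Part (iv)
  have part4 : ∀ i j : Fin h, (i : ℕ) + 1 = (j : ℕ) →
      |(s j : ℤ) - (s i : ℤ)| ≤ 2 := by
    intro i j hij
    have hij' : i < j := Fin.lt_def.2 (by omega)
    have hmij : (m i : ℕ) < (m j : ℕ) := Fin.lt_def.1 (hmono hij')
    have hMij : (σ (m i) : ℕ) < (σ (m j) : ℕ) := Mmono i j hij'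
    have e1 : cntB (gOp σ) ((m i : ℕ)) ((σ (m j) : ℕ)) =
        cntB (gOp σ) ((m i : ℕ)) ((m j : ℕ)) +
        cntB (gOp σ) ((m j : ℕ)) ((σ (m j) : ℕ)) :=
      cntB_add _ (le_of_lt hmij) (le_of_lt (op_mk j))
    have e2 : cntB (gOp σ) ((m i : ℕ)) ((σ (m j) : ℕ)) =
        cntB (gOp σ) ((m i : ℕ)) ((σ (m i) : ℕ)) +
        cntB (gOp σ) ((σ (m i) : ℕ)) ((σ (m j) : ℕ)) :=
      cntB_add _ (le_of_lt (op_mk i)) (le_of_lt hMij)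
    have b1 : cntB (gOp σ) ((m i : ℕ)) ((m j : ℕ)) ≤ 2 := by
      apply cntB_le_two (gOp σ) false
      intro x hx1 hx2
      have hxn : x < n := lt_trans hx2 (m j).isLt
      rcases op_or_cl ⟨x, hxn⟩ with hop | hcl
      · exfalso
        obtain ⟨k, hk⟩ := op_ex _ hop
        have hk1 : (m k : ℕ) = x := by rw [hk]
        have hik : i < k := lt_of_not_ge fun hle => by
          have := Fin.le_def.1 (hmono.monotone hle); omega
        have hkj : k < j := lt_of_not_ge fun hle => by
          have := Fin.le_def.1 (hmono.monotone hle); omega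
        rw [Fin.lt_def] at hik hkj
        omega
      · exact (gfalse _).2 hcl
    have b2 : cntB (gOp σ) ((σ (m i) : ℕ)) ((σ (m j) : ℕ)) ≤ 2 := by
      apply cntB_le_two (gOp σ) true
      intro x hx1 hx2
      have hxn : x < n := lt_trans hx2 (σ (m j)).isLt
      rcases op_or_cl ⟨x, hxn⟩ with hop | hcl
      · exact (gtrue _).2 hop
      · exfalso
        obtain ⟨k, hk⟩ := cl_ex _ hcl
        have hk1 : (σ (m k) : ℕ) = x := by rw [hk]
        have hik : i < k := lt_of_not_ge fun hle => by have := Mmono' k i hle; omega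
        have hkj : k < j := lt_of_not_ge fun hle => by have := Mmono' j k hle; omega
        rw [Fin.lt_def] at hik hkj
        omega
    rw [hsC i, hsC j, abs_le]
    constructor <;> omega
  exact ⟨part1, fun i => ⟨part2a i, part2b i⟩,
    fun i hsi => ⟨fun j hj hsj => main3 j i hj hsj hsi,
      fun j hj hsj => main3 i j hj hsi hsj⟩, part4⟩
end
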